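/- arXiv:1112.5727 — 12 statements merged into one kernel-verified Lean document; each statement's English description precedes it below -/
import Mathlib

section
/- Let X be an infinite set and let FSym(X) denote the group of bijections f : X → X with finite support supp(f) = {x ∈ X : f(x) ≠ x}. Then FSym(X) is σ-discrete (a countable union of discrete subspaces) in every Hausdorff shift-invariant topology on FSym(X). -/
/-!
Let `Sₙ` be the set of elements of `FSym X` moving exactly `n` points; we show each `Sₙ` is
discrete. If `f ∈ Sₙ` accumulated at `Sₙ`, an ultrafilter on `Sₙ \ {f}` converging to `f`, shifted
by `f⁻¹`, would give an ultrafilter `𝒰 → 1` living on the `h ≠ 1` with `f * h ∈ Sₙ`; such `h` move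
at most `2n` points. By Hausdorffness, an identity `z * a = b * z` holding for `𝒰`-almost all `z`
survives the limit `z → 1`. Among any `2n + 1` points one, `t`, is fixed `𝒰`-almost surely, so
`h * swap x t = swap y t * h` rules out `h x = y` holding `𝒰`-almost surely for `x ≠ y`. Hence
almost every `h` maps each point moved by `f` to itself or to a point fixed by `f`, and for such
`h ≠ 1` the element `f * h` moves strictly more points than `f`: a contradiction.
-/

/-- The group of finitely supported bijections of `X`, as a subgroup of `Equiv.Perm X`. -/
def FSym (X : Type*) : Subgroup (Equiv.Perm X) where
  carrier := {f : Equiv.Perm X | {x : X | f x ≠ x}.Finite}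
  mul_mem' := by
    intro a b ha hb
    refine Set.Finite.subset (ha.union hb) ?_
    intro x hx
    simp only [Set.mem_setOf_eq, Equiv.Perm.mul_apply, Set.mem_union] at hx ⊢
    by_cases h : b x = x
    · exact Or.inl (by rwa [h] at hx)
    · exact Or.inr h
  one_mem' := by simp
  inv_mem' := by
    intro a ha
    have h : {x : X | a⁻¹ x ≠ x} = {x : X | a x ≠ x} := by
      ext x
      simp only [Set.mem_setOf_eq, ne_eq, not_iff_not]
      constructor
      · intro hx; nth_rewrite 1 [← hx]; exact a.apply_symm_apply x
      · intro hx; nth_rewrite 1 [← hx]; exact a.symm_apply_apply x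
    simp only [Set.mem_setOf_eq] at ha ⊢
    rw [h]
    exact ha

/-- A topological space (given by a topology `τ` on `S`) is σ-discrete if it is a countable
union of subspaces, each of which is discrete in its subspace topology. -/
def SigmaDiscrete {S : Type*} (τ : TopologicalSpace S) : Prop :=
  ∃ D : ℕ → Set S, (⋃ n, D n) = Set.univ ∧
    ∀ n, @DiscreteTopology (D n) (TopologicalSpace.induced Subtype.val τ)

open Filter Topology MulAction

section SeparatelyContinuousMul

variable {M : Type*} [MulOneClass M] [TopologicalSpace M] [SeparatelyContinuousMul M] [T2Space M]

theorem eq_of_eventually_mul_eq_mul {l : Filter M} [l.NeBot] (hl : l ≤ 𝓝 1) {a b : M}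
    (h : ∀ᶠ z in l, z * a = b * z) : a = b := by
  have ha : Tendsto (· * a) l (𝓝 a) := by
    simpa using ((continuous_mul_const a).tendsto 1).mono_left hl
  have hb : Tendsto (b * ·) l (𝓝 b) := by
    simpa using ((continuous_const_mul b).tendsto 1).mono_left hl
  exact tendsto_nhds_unique_of_eventuallyEq ha hb h

end SeparatelyContinuousMul

namespace MulAction

variable {G α : Type*} [Group G] [MulAction G α]

theorem compl_fixedBy_subset_union (f h : G) :
    (fixedBy α h)ᶜ ⊆ (fixedBy α f)ᶜ ∪ (fixedBy α (f * h))ᶜ := by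
  rw [← Set.compl_inter, Set.compl_subset_compl, ← fixedBy_inv α f]
  simpa using fixedBy_mul (α := α) f⁻¹ (f * h)

theorem ncard_compl_fixedBy_lt_mul [FaithfulSMul G α] {f h : G}
    (hfh : (fixedBy α (f * h))ᶜ.Finite) (h1 : h ≠ 1)
    (hh : ∀ x ∈ (fixedBy α f)ᶜ, h • x = x ∨ h • x ∉ (fixedBy α f)ᶜ) :
    (fixedBy α f)ᶜ.ncard < (fixedBy α (f * h))ᶜ.ncard := by
  have hmono : (fixedBy α f)ᶜ ⊆ (fixedBy α (f * h))ᶜ := fun x hx => by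
    rw [Set.mem_compl_iff, mem_fixedBy, mul_smul]
    rcases hh x hx with hx' | hx'
    · rwa [hx']
    · rw [show f • h • x = h • x from not_not.1 hx']
      exact fun e => hx' (by rwa [e])
  -- if `f * h` moved no point fixed by `f`, then `h` would act trivially
  refine Set.ncard_lt_ncard
    ⟨hmono, fun hsub => h1 (eq_of_smul_eq_smul (α := α) fun y => ?_)⟩ hfh
  have hfix {z : α} (hz : z ∉ (fixedBy α f)ᶜ) : (f * h) • z = z :=
    not_not.1 fun hz' => hz (hsub hz')
  rw [one_smul]
  by_cases hy : y ∈ (fixedBy α f)ᶜ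
  · rcases hh y hy with hy' | hy'
    · exact hy'
    · apply smul_left_cancel (f * h)
      rw [hfix hy', mul_smul, not_not.1 hy']
  · apply smul_left_cancel f
    rw [← mul_smul, hfix hy, not_not.1 hy]

end MulAction

namespace FSym

variable {X : Type*}

theorem swap_mem [DecidableEq X] (x y : X) : Equiv.swap x y ∈ FSym X :=
  ((Set.finite_singleton y).insert x).subset fun _ hz => (Equiv.swap_apply_ne_self_iff.1 hz).2

theorem finite_compl_fixedBy (g : FSym X) : (fixedBy X g)ᶜ.Finite := g.2

section Ultrafilter

variable [TopologicalSpace (FSym X)] [SeparatelyContinuousMul (FSym X)] [T2Space (FSym X)]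
  {𝒰 : Ultrafilter (FSym X)} {m : ℕ}

theorem not_eventually_smul_eq [Infinite X] (h𝒰 : (𝒰 : Filter (FSym X)) ≤ 𝓝 1)
    (hbdd : ∀ᶠ h : FSym X in 𝒰, (fixedBy X h)ᶜ.ncard ≤ m) {x y : X} (hxy : x ≠ y) :
    ¬ ∀ᶠ h : FSym X in 𝒰, h • x = y := by
  classical
  intro hy
  obtain ⟨T, hT, hTcard⟩ := ({x, y} : Set X).toFinite.infinite_compl.exists_subset_card_eq (m + 1)
  have hfixT : ∀ᶠ h : FSym X in 𝒰, ∃ t ∈ (T : Set X), h • t = t := hbdd.mono fun h hh => by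
    by_contra! hmove
    have := Set.ncard_le_ncard (s := (T : Set X)) (t := (fixedBy X h)ᶜ) hmove
      (finite_compl_fixedBy h)
    rw [Set.ncard_coe_finset, hTcard] at this
    omega
  obtain ⟨t, htT, ht⟩ := (Ultrafilter.eventually_exists_mem_iff T.finite_toSet).1 hfixT
  obtain ⟨hxt, hyt⟩ : x ≠ t ∧ y ≠ t := by simpa [eq_comm] using hT htT
  have hswap : (⟨Equiv.swap x t, swap_mem x t⟩ : FSym X) = ⟨Equiv.swap y t, swap_mem y t⟩ :=
    eq_of_eventually_mul_eq_mul h𝒰 <| (hy.and ht).mono fun h ⟨hx, ht⟩ => Subtype.ext <| by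
      change (h : Equiv.Perm X) x = y at hx
      change (h : Equiv.Perm X) t = t at ht
      simp only [Subgroup.coe_mul, Equiv.mul_swap_eq_swap_mul, hx, ht]
  have := DFunLike.congr_fun (congrArg Subtype.val hswap) t
  simp only [Equiv.swap_apply_right] at this
  exact hxy this

theorem eventually_smul_eq_or_notMem [Infinite X] (h𝒰 : (𝒰 : Filter (FSym X)) ≤ 𝓝 1)
    (hbdd : ∀ᶠ h : FSym X in 𝒰, (fixedBy X h)ᶜ.ncard ≤ m) (x : X) {s : Set X} (hs : s.Finite) :
    ∀ᶠ h : FSym X in 𝒰, h • x = x ∨ h • x ∉ s := by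
  by_contra hne
  rw [← Ultrafilter.eventually_not] at hne
  have hmem : ∀ᶠ h : FSym X in 𝒰, ∃ y ∈ s \ {x}, h • x = y := hne.mono fun h hh => by
    rw [not_or, not_not] at hh
    exact ⟨_, ⟨hh.2, hh.1⟩, rfl⟩
  obtain ⟨y, hy, hxy⟩ := (Ultrafilter.eventually_exists_mem_iff hs.sdiff).1 hmem
  exact not_eventually_smul_eq h𝒰 hbdd (fun h => hy.2 h.symm) hxy

end Ultrafilter

theorem not_accPt_setOf_ncard_eq [Infinite X] [TopologicalSpace (FSym X)]
    [SeparatelyContinuousMul (FSym X)] [T2Space (FSym X)] {n : ℕ} {f : FSym X}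
    (hf : (fixedBy X f)ᶜ.ncard = n) :
    ¬ AccPt f (𝓟 {g : FSym X | (fixedBy X g)ᶜ.ncard = n}) := by
  unfold AccPt
  intro
  let 𝒰 := (Ultrafilter.of (𝓝[≠] f ⊓ 𝓟 {g : FSym X | (fixedBy X g)ᶜ.ncard = n})).map (f⁻¹ * ·)
  have h𝒰 : (𝒰 : Filter (FSym X)) ≤ 𝓝 1 := by
    have := (continuous_const_mul f⁻¹).tendsto f
    rw [inv_mul_cancel] at this
    exact this.mono_left ((Ultrafilter.of_le _).trans (inf_le_left.trans nhdsWithin_le_nhds))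
  have hnear : ∀ᶠ h : FSym X in 𝒰, h ≠ 1 ∧ (fixedBy X (f * h))ᶜ.ncard = n := by
    refine Filter.eventually_map.2 (Ultrafilter.of_le _ ?_)
    filter_upwards [inter_mem_inf self_mem_nhdsWithin (mem_principal_self _)] with g hg
    simpa [inv_mul_eq_one, eq_comm] using hg
  have hbdd : ∀ᶠ h : FSym X in 𝒰, (fixedBy X h)ᶜ.ncard ≤ n + n := hnear.mono fun h hh =>
    calc (fixedBy X h)ᶜ.ncard
        ≤ ((fixedBy X f)ᶜ ∪ (fixedBy X (f * h))ᶜ).ncard :=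
          Set.ncard_le_ncard (compl_fixedBy_subset_union f h)
            ((finite_compl_fixedBy f).union (finite_compl_fixedBy (f * h)))
      _ ≤ n + n := (Set.ncard_union_le _ _).trans_eq (by rw [hf, hh.2])
  have hstay : ∀ᶠ h : FSym X in 𝒰,
      ∀ x ∈ (fixedBy X f)ᶜ, h • x = x ∨ h • x ∉ (fixedBy X f)ᶜ :=
    (finite_compl_fixedBy f).eventually_all.2 fun x _ =>
      eventually_smul_eq_or_notMem h𝒰 hbdd x (finite_compl_fixedBy f)
  obtain ⟨h, ⟨hne, hcard⟩, hh⟩ := (hnear.and hstay).exists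
  have := ncard_compl_fixedBy_lt_mul (finite_compl_fixedBy (f * h)) hne hh
  omega

end FSym

/-- For an infinite set `X`, the group `FSym X` of finitely supported bijections of `X` is
σ-discrete in every Hausdorff shift-invariant topology. -/
theorem fsym_sigmaDiscrete_of_hausdorff_shift_invariant
    {X : Type*} [Infinite X] (τ : TopologicalSpace ↥(FSym X))
    (hT2 : @T2Space ↥(FSym X) τ)
    (hleft : ∀ a : ↥(FSym X), @Continuous _ _ τ τ (fun x => a * x))
    (hright : ∀ a : ↥(FSym X), @Continuous _ _ τ τ (fun x => x * a)) :
    SigmaDiscrete τ := by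
  let := τ
  have : SeparatelyContinuousMul (FSym X) := ⟨hleft _, hright _⟩
  refine ⟨fun n => {g | (fixedBy X g)ᶜ.ncard = n}, Set.iUnion_eq_univ_iff.2 fun g => ⟨_, rfl⟩,
    fun n => discreteTopology_of_noAccPts fun f hf => FSym.not_accPt_setOf_ncard_eq hf⟩
end

section
/- Let X be an infinite set and let FSym(X) denote the group of bijections f : X → X with finite support supp(f) = {x ∈ X : f(x) ≠ x}. Then every Baire Hausdorff shift-invariant topology on FSym(X) is discrete. -/
/-!
The sets of permutations moving at most `n` points are closed, being intersections of finite
unions of centralisers, and they cover `FSym X`; by the Baire property one of them has nonempty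
interior `V`. Right translation by a point `f ∈ V` moving the most points turns `V` into a
neighbourhood of `1` whose nontrivial elements move at most `2 n` points, at least one of them
in the finite support `A` of `f`. Intersecting such a neighbourhood with its conjugate by a
permutation moving `A` off itself doubles the number of moved points forced into a finite set,
so after enough doublings only `1` is left.
-/

open Function MulAction Set Pointwise Filter Topology

section MovedBy

variable {G α : Type*} [Group G] [MulAction G α]

lemma MulAction.movedBy_mul_subset (g h : G) :
    (fixedBy α (g * h))ᶜ ⊆ (fixedBy α g)ᶜ ∪ (fixedBy α h)ᶜ := by
  rw [← compl_inter]
  exact compl_subset_compl.mpr (fixedBy_mul α g h)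

lemma MulAction.movedBy_mul_of_disjoint {g h : G}
    (hgh : Disjoint (fixedBy α g)ᶜ (fixedBy α h)ᶜ) :
    (fixedBy α (g * h))ᶜ = (fixedBy α g)ᶜ ∪ (fixedBy α h)ᶜ := by
  refine (movedBy_mul_subset g h).antisymm ?_
  rintro x (hx | hx) hfix <;> rw [mem_fixedBy, mul_smul] at hfix
  · have hhx : h • x = x := by_contra fun h' => disjoint_left.mp hgh hx h'
    rw [hhx] at hfix
    exact hx hfix
  · have hgx : g • h • x = h • x := by_contra fun h' =>
      disjoint_left.mp hgh h' ((smul_mem_fixedBy_iff_mem_fixedBy).not.mpr hx)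
    rw [hgx] at hfix
    exact hx hfix

end MovedBy

namespace FSym

variable {X : Type*}

lemma finite_movedBy (u : FSym X) : (fixedBy X u)ᶜ.Finite := u.2

lemma movedBy_nonempty {u : FSym X} (hu : u ≠ 1) : (fixedBy X u)ᶜ.Nonempty := by
  rwa [nonempty_compl, Ne, fixedBy_eq_univ_iff_eq_one]

lemma commute_of_disjoint_movedBy {u v : FSym X}
    (h : Disjoint (fixedBy X u)ᶜ (fixedBy X v)ᶜ) : Commute u v :=
  Subtype.ext (Equiv.Perm.Disjoint.commute fun x => by
    by_contra! hx
    exact disjoint_left.mp h hx.1 hx.2).eq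

lemma ncard_movedBy_le_mul_add (u f : FSym X) :
    (fixedBy X u)ᶜ.ncard ≤ (fixedBy X (u * f))ᶜ.ncard + (fixedBy X f)ᶜ.ncard := by
  have hsub := movedBy_mul_subset (α := X) (u * f) f⁻¹
  rw [mul_inv_cancel_right, fixedBy_inv] at hsub
  exact (ncard_le_ncard hsub ((finite_movedBy _).union (finite_movedBy f))).trans
    (ncard_union_le _ _)

lemma inter_movedBy_nonempty_of_ncard_mul_le {u f : FSym X} (hu : u ≠ 1)
    (h : (fixedBy X (u * f))ᶜ.ncard ≤ (fixedBy X f)ᶜ.ncard) :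
    ((fixedBy X u)ᶜ ∩ (fixedBy X f)ᶜ).Nonempty := by
  by_contra hdisj
  rw [not_nonempty_iff_eq_empty, ← disjoint_iff_inter_eq_empty] at hdisj
  rw [movedBy_mul_of_disjoint hdisj,
    ncard_union_eq hdisj (finite_movedBy u) (finite_movedBy f)] at h
  have := (ncard_pos (finite_movedBy u)).mpr (movedBy_nonempty hu)
  omega

section Swap

variable [DecidableEq X]

def swap (x y : X) : FSym X :=
  ⟨Equiv.swap x y, (toFinite {x, y}).subset fun _ hz => (Equiv.swap_apply_ne_self_iff.mp hz).2⟩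

@[simp]
lemma swap_smul (x y z : X) : swap x y • z = Equiv.swap x y z := rfl

lemma movedBy_swap_subset (x y : X) : (fixedBy X (swap x y))ᶜ ⊆ {x, y} :=
  fun _ hz => (Equiv.swap_apply_ne_self_iff.mp hz).2

end Swap

lemma exists_smul_disjoint [Infinite X] {A C : Set X} (hA : A.Finite) (hC : C.Finite) :
    ∃ g : FSym X, Disjoint (g • A) C := by
  classical
  induction A, hA using Set.Finite.induction_on with
  | empty => exact ⟨1, by simp⟩
  | @insert a A ha hA ih =>
    obtain ⟨g, hg⟩ := ih
    obtain ⟨b, hb⟩ := (hC.union (hA.smul_set (a := g))).infinite_compl.nonempty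
    simp only [mem_compl_iff, mem_union, not_or] at hb
    -- `swap (g • a) b` sends `g • a` off `C` and fixes `g • A`
    refine ⟨swap (g • a) b * g, disjoint_left.mpr ?_⟩
    rintro _ ⟨x, hx, rfl⟩
    dsimp only
    rw [mul_smul, swap_smul]
    rcases hx with rfl | hx
    · rw [Equiv.swap_apply_left]
      exact hb.1
    · have hgx : g • x ∈ g • A := smul_mem_smul_set hx
      have hne_a : g • x ≠ g • a := fun h => ha (smul_left_cancel g h ▸ hx)
      have hne_b : g • x ≠ b := fun h => hb.2 (h ▸ hgx)
      rw [Equiv.swap_apply_of_ne_of_ne hne_a hne_b]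
      exact disjoint_left.mp hg hgx

lemma exists_commute_of_ncard_movedBy_le {n : ℕ} {f : FSym X}
    (hf : (fixedBy X f)ᶜ.ncard ≤ n) (g : Fin (n + 1) → FSym X)
    (hg : Pairwise (Disjoint on fun i => (fixedBy X (g i))ᶜ)) : ∃ i, Commute (g i) f := by
  by_contra! hcomm
  have hmeet i : ((fixedBy X (g i))ᶜ ∩ (fixedBy X f)ᶜ).Nonempty := by
    by_contra hdisj
    rw [not_nonempty_iff_eq_empty, ← disjoint_iff_inter_eq_empty] at hdisj
    exact hcomm i (commute_of_disjoint_movedBy hdisj)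
  choose x hx using hmeet
  have hinj : Injective fun i => (⟨x i, (hx i).2⟩ : ↥(fixedBy X f)ᶜ) :=
    fun i j hij => by
      by_contra hne
      have hxij : x i = x j := congrArg Subtype.val hij
      exact disjoint_left.mp (hg hne) (hx i).1 (hxij ▸ (hx j).1)
  have := (finite_movedBy f).to_subtype
  have := Nat.card_le_card_of_injective _ hinj
  rw [Nat.card_eq_fintype_card, Fintype.card_fin, Nat.card_coe_set_eq] at this
  omega

lemma exists_pairwise_disjoint_not_commute [Infinite X] {n : ℕ} {f : FSym X}
    (hf : n < (fixedBy X f)ᶜ.ncard) :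
    ∃ g : Fin (n + 1) → FSym X,
      Pairwise (Disjoint on fun i => (fixedBy X (g i))ᶜ) ∧ ∀ i, ¬Commute (g i) f := by
  classical
  have hcard : n + 1 ≤ Nat.card ↥(fixedBy X f)ᶜ := by rw [Nat.card_coe_set_eq]; omega
  have := (finite_movedBy f).to_subtype
  let a : Fin (n + 1) ↪ ↥(fixedBy X f)ᶜ :=
    (Fin.castLEEmb hcard).trans (Finite.equivFin _).symm.toEmbedding
  have hinf : (fixedBy X f).Infinite := by simpa using (finite_movedBy f).infinite_compl
  let b : Fin (n + 1) ↪ fixedBy X f := Fin.valEmbedding.trans hinf.natEmbedding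
  have hab i j : (a i : X) ≠ b j := fun h => (a i).2 (h ▸ (b j).2)
  refine ⟨fun i => swap (a i) (b i), fun i j hij => ?_, fun i hcomm => ?_⟩
  · refine Disjoint.mono (movedBy_swap_subset _ _) (movedBy_swap_subset _ _) ?_
    have ha : (a j : X) ≠ a i := Subtype.val_injective.ne (a.injective.ne hij.symm)
    have hb : (b j : X) ≠ b i := Subtype.val_injective.ne (b.injective.ne hij.symm)
    simp [hab, (hab _ _).symm, ha, hb]
  · -- at `b i` the left side of `hcomm` gives `a i`, the right side `f • a i`
    have := congrArg (· • (b i : X)) hcomm.eq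
    simp only [mul_smul, swap_smul, mem_fixedBy.mp (b i).2, Equiv.swap_apply_right] at this
    exact (a i).2 this.symm

lemma setOf_ncard_movedBy_le_eq_iInter [Infinite X] (n : ℕ) :
    {f : FSym X | (fixedBy X f)ᶜ.ncard ≤ n} =
      ⋂ (g : Fin (n + 1) → FSym X) (_ : Pairwise (Disjoint on fun i => (fixedBy X (g i))ᶜ)),
        ⋃ i, {f | Commute (g i) f} := by
  ext f
  simp only [mem_ofPred_eq, mem_iInter, mem_iUnion]
  refine ⟨fun hf g hg => exists_commute_of_ncard_movedBy_le hf g hg, fun h => ?_⟩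
  by_contra! hf
  obtain ⟨g, hg, hcomm⟩ := exists_pairwise_disjoint_not_commute hf
  obtain ⟨i, hi⟩ := h g hg
  exact hcomm i hi

section Topology

variable [TopologicalSpace (FSym X)] [SeparatelyContinuousMul (FSym X)]

lemma isClosed_setOf_ncard_movedBy_le [Infinite X] [T2Space (FSym X)] (n : ℕ) :
    IsClosed {f : FSym X | (fixedBy X f)ᶜ.ncard ≤ n} := by
  rw [setOf_ncard_movedBy_le_eq_iInter]
  exact isClosed_iInter fun g => isClosed_iInter fun _ => isClosed_iUnion_of_finite fun i =>
    isClosed_eq (continuous_const_mul _) (continuous_mul_const _)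

lemma exists_finite_eventually_two_mul_le [Infinite X] {B : Set X} (hB : B.Finite) {k : ℕ}
    (hk : ∀ᶠ u in 𝓝 (1 : FSym X), u ≠ 1 → k ≤ ((fixedBy X u)ᶜ ∩ B).ncard) :
    ∃ B' : Set X, B'.Finite ∧
      ∀ᶠ u in 𝓝 (1 : FSym X), u ≠ 1 → 2 * k ≤ ((fixedBy X u)ᶜ ∩ B').ncard := by
  obtain ⟨g, hg⟩ := exists_smul_disjoint hB hB
  have hconj : Tendsto (fun u => g⁻¹ * u * g) (𝓝 1) (𝓝 1) :=
    ((continuous_mul_const g).comp (continuous_const_mul g⁻¹)).tendsto' 1 1 (by simp)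
  refine ⟨g • B ∪ B, hB.smul_set.union hB, (hk.and (hconj.eventually hk)).mono ?_⟩
  rintro u ⟨hu, hconj_u⟩ hu1
  have hconj_ne : g⁻¹ * u * g ≠ 1 := by
    rwa [Ne, mul_assoc, inv_mul_eq_one, eq_comm, mul_eq_right]
  have hcount : ((fixedBy X (g⁻¹ * u * g))ᶜ ∩ B).ncard = ((fixedBy X u)ᶜ ∩ g • B).ncard := by
    rw [← ncard_smul_set g, smul_set_inter, smul_set_compl, smul_fixedBy]
    group
  have hfin : ((fixedBy X u)ᶜ ∩ g • B).Finite := hB.smul_set.subset inter_subset_right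
  calc 2 * k ≤ ((fixedBy X u)ᶜ ∩ g • B).ncard + ((fixedBy X u)ᶜ ∩ B).ncard := by
        have := hconj_u hconj_ne
        have := hu hu1
        omega
    _ = ((fixedBy X u)ᶜ ∩ (g • B ∪ B)).ncard := by
        rw [inter_union_distrib_left, ncard_union_eq _ hfin (hB.subset inter_subset_right)]
        exact (hg.mono inter_subset_right inter_subset_right)

lemma eventually_eq_one_of_movedBy_inter_nonempty [Infinite X] {A : Set X} (hA : A.Finite)
    (hmeet : ∀ᶠ u in 𝓝 (1 : FSym X), u ≠ 1 → ((fixedBy X u)ᶜ ∩ A).Nonempty) {N : ℕ}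
    (hN : ∀ᶠ u in 𝓝 (1 : FSym X), (fixedBy X u)ᶜ.ncard ≤ N) :
    ∀ᶠ u in 𝓝 (1 : FSym X), u = 1 := by
  have hpow (j : ℕ) : ∃ B : Set X, B.Finite ∧
      ∀ᶠ u in 𝓝 (1 : FSym X), u ≠ 1 → 2 ^ j ≤ ((fixedBy X u)ᶜ ∩ B).ncard := by
    induction j with
    | zero =>
      exact ⟨A, hA, hmeet.mono fun u hu hu1 =>
        (ncard_pos (hA.subset inter_subset_right)).mpr (hu hu1)⟩
    | succ j ih =>
      obtain ⟨B, hB, hj⟩ := ih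
      simpa only [pow_succ'] using exists_finite_eventually_two_mul_le hB hj
  obtain ⟨B, -, hB⟩ := hpow N
  filter_upwards [hB, hN] with u hu huN
  by_contra hu1
  have := (hu hu1).trans (ncard_le_ncard inter_subset_left (finite_movedBy u))
  have := N.lt_two_pow_self
  omega

lemma eventually_eq_one_of_isOpen_subset_setOf_ncard_movedBy_le [Infinite X]
    {V : Set (FSym X)} (hV : IsOpen V) (hne : V.Nonempty) {n : ℕ}
    (hVn : V ⊆ {f : FSym X | (fixedBy X f)ᶜ.ncard ≤ n}) :
    ∀ᶠ u in 𝓝 (1 : FSym X), u = 1 := by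
  have hbdd : BddAbove ((fun f : FSym X => (fixedBy X f)ᶜ.ncard) '' V) :=
    ⟨n, forall_mem_image.mpr hVn⟩
  obtain ⟨_, ⟨f, hfV, rfl⟩, hmax⟩ := hbdd.exists_isGreatest_of_nonempty (hne.image _)
  have hV' : ∀ᶠ u in 𝓝 (1 : FSym X), u * f ∈ V :=
    (continuous_mul_const f).tendsto' 1 f (one_mul f) (hV.mem_nhds hfV)
  have hle : ∀ᶠ u in 𝓝 (1 : FSym X), (fixedBy X (u * f))ᶜ.ncard ≤ (fixedBy X f)ᶜ.ncard :=
    hV'.mono fun u hu => hmax ⟨u * f, hu, rfl⟩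
  refine eventually_eq_one_of_movedBy_inter_nonempty (finite_movedBy f)
    (hle.mono fun u hu hu1 => inter_movedBy_nonempty_of_ncard_mul_le hu1 hu)
    (N := 2 * (fixedBy X f)ᶜ.ncard) (hle.mono fun u hu => ?_)
  have := ncard_movedBy_le_mul_add u f
  omega

end Topology

end FSym

/-- For an infinite set `X`, every Baire Hausdorff shift-invariant topology on the group
`FSym X` of finitely supported bijections of `X` is discrete. -/
theorem fsym_discrete_of_baire_hausdorff_shift_invariant
    {X : Type*} [Infinite X] (τ : TopologicalSpace ↥(FSym X))
    (hT2 : @T2Space ↥(FSym X) τ)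
    (hleft : ∀ a : ↥(FSym X), @Continuous _ _ τ τ (fun x => a * x))
    (hright : ∀ a : ↥(FSym X), @Continuous _ _ τ τ (fun x => x * a))
    (hBaire : ∀ U : ℕ → Set ↥(FSym X), (∀ n, @IsOpen _ τ (U n)) → (∀ n, @Dense _ τ (U n)) →
      @Dense _ τ (⋂ n, U n)) :
    @DiscreteTopology ↥(FSym X) τ := by
  let := τ
  have := hT2
  have : SeparatelyContinuousMul (FSym X) := ⟨hleft _, hright _⟩
  have : BaireSpace (FSym X) := ⟨hBaire⟩
  obtain ⟨n, hn⟩ := nonempty_interior_of_iUnion_of_closed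
    (FSym.isClosed_setOf_ncard_movedBy_le (X := X))
    (iUnion_eq_univ_iff.mpr fun f => ⟨_, le_refl (fixedBy X f)ᶜ.ncard⟩)
  have hone := FSym.eventually_eq_one_of_isOpen_subset_setOf_ncard_movedBy_le
    isOpen_interior hn interior_subset
  exact discreteTopology_of_isOpen_singleton_one
    (isOpen_iff_mem_nhds.mpr (by rintro _ rfl; exact hone))
end

section
/- Let (S, supp) be a supp-perfect semigroup with support map supp : S → Set X, where X = ⋃_{a∈S} supp(a). Then S has finite double centralizers: for every finite subset T ⊆ S the double centralizer Cent(Cent(T)) = {f ∈ S : ∀ g, (∀ t ∈ T, t·g = g·t) → f·g = g·f} is finite. -/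
/-! With `F = ⋃ t ∈ T, supp t`, everything supported in `Fᶜ` commutes with `T`, so
`Cent(Cent(T)) ⊆ Cent(S(Fᶜ))`, and perfection identifies the latter with the finite set `S(F)`. -/

theorem setOf_supp_subset_compl_biUnion_subset_centralizer {S X : Type*} [Mul S]
    (supp : S → Set X) (h2 : ∀ f g : S, supp f ∩ supp g = ∅ → f * g = g * f) (T : Set S) :
    {g : S | supp g ⊆ (⋃ t ∈ T, supp t)ᶜ} ⊆ T.centralizer := by
  intro g hg t ht
  refine h2 t g (Set.eq_empty_iff_forall_notMem.mpr ?_)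
  rintro x ⟨hxt, hxg⟩
  exact hg hxg (Set.mem_biUnion ht hxt)

theorem suppPerfect_finite_double_centralizers_general
    {S X : Type*} [Semigroup S] (supp : S → Set X)
    (h2 : ∀ f g : S, supp f ∩ supp g = ∅ → f * g = g * f)
    (hfin : ∀ f : S, (supp f).Finite)
    (hSF : ∀ F : Set X, F.Finite → {f : S | supp f ⊆ F}.Finite)
    (hperf : ∀ F : Set X, F.Finite →
      {f : S | supp f ⊆ F} = {g : S | ∀ f : S, supp f ⊆ Fᶜ → f * g = g * f})
    (T : Set S) (hT : T.Finite) :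
    {f : S | ∀ g : S, (∀ t ∈ T, t * g = g * t) → f * g = g * f}.Finite := by
  have hF : (⋃ t ∈ T, supp t).Finite := hT.biUnion fun t _ => hfin t
  have hcent : {f : S | ∀ g : S, (∀ t ∈ T, t * g = g * t) → f * g = g * f} =
      T.centralizer.centralizer := by
    ext f
    simp only [Set.mem_ofPred_eq, Set.mem_centralizer_iff, eq_comm]
  rw [hcent]
  refine (hSF _ hF).subset ?_
  rw [hperf _ hF]
  exact Set.centralizer_subset (setOf_supp_subset_compl_biUnion_subset_centralizer supp h2 T)

/-- Every supp-perfect semigroup has finite double centralizers: for every finite subset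
`T ⊆ S` the double centralizer `Cent(Cent(T))` is finite. -/
theorem suppPerfect_finite_double_centralizers
    {S X : Type*} [Semigroup S] (supp : S → Set X)
    (h1 : ∀ f g : S, supp (f * g) ⊆ supp f ∪ supp g)
    (h2 : ∀ f g : S, supp f ∩ supp g = ∅ → f * g = g * f)
    (hX : (⋃ a : S, supp a) = Set.univ)
    (hfin : ∀ f : S, (supp f).Finite)
    (hSF : ∀ F : Set X, F.Finite → {f : S | supp f ⊆ F}.Finite)
    (hperf : ∀ F : Set X, F.Finite →
      {f : S | supp f ⊆ F} = {g : S | ∀ f : S, supp f ⊆ Fᶜ → f * g = g * f})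
    (T : Set S) (hT : T.Finite) :
    {f : S | ∀ g : S, (∀ t ∈ T, t * g = g * t) → f * g = g * f}.Finite :=
  suppPerfect_finite_double_centralizers_general supp h2 hfin hSF hperf T hT
end

section
/- Let (S, supp) be a supp-perfect semigroup with support map supp : S → Set X, where X = ⋃_{a∈S} supp(a). Then S is locally finite: every finite subset F ⊆ S is contained in a finite subsemigroup T ⊆ S. -/
/-- `S(E)` in the notation of supp-semigroups. -/
def suppSubsemigroup {S X : Type*} [Mul S] (supp : S → Set X)
    (supp_mul : ∀ f g : S, supp (f * g) ⊆ supp f ∪ supp g) (E : Set X) : Subsemigroup S where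
  carrier := {f | supp f ⊆ E}
  mul_mem' ha hb := (supp_mul _ _).trans (Set.union_subset ha hb)

theorem suppPerfect_locallyFinite_general
    {S X : Type*} [Semigroup S] (supp : S → Set X)
    (h1 : ∀ f g : S, supp (f * g) ⊆ supp f ∪ supp g)
    (hfin : ∀ f : S, (supp f).Finite)
    (hSF : ∀ F : Set X, F.Finite → {f : S | supp f ⊆ F}.Finite)
    (F : Set S) (hF : F.Finite) :
    ∃ T : Set S, T.Finite ∧ F ⊆ T ∧ ∀ a ∈ T, ∀ b ∈ T, a * b ∈ T := by
  let T := suppSubsemigroup supp h1 (⋃ g ∈ F, supp g)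
  exact ⟨T, hSF _ (hF.biUnion fun g _ => hfin g), fun f hf => Set.subset_biUnion_of_mem hf,
    fun _ ha _ hb => T.mul_mem ha hb⟩

/-- Every supp-perfect semigroup is locally finite: every finite subset is contained in a
finite subsemigroup. -/
theorem suppPerfect_locallyFinite
    {S X : Type*} [Semigroup S] (supp : S → Set X)
    (h1 : ∀ f g : S, supp (f * g) ⊆ supp f ∪ supp g)
    (h2 : ∀ f g : S, supp f ∩ supp g = ∅ → f * g = g * f)
    (hX : (⋃ a : S, supp a) = Set.univ)
    (hfin : ∀ f : S, (supp f).Finite)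
    (hSF : ∀ F : Set X, F.Finite → {f : S | supp f ⊆ F}.Finite)
    (hperf : ∀ F : Set X, F.Finite →
      {f : S | supp f ⊆ F} = {g : S | ∀ f : S, supp f ⊆ Fᶜ → f * g = g * f})
    (F : Set S) (hF : F.Finite) :
    ∃ T : Set S, T.Finite ∧ F ⊆ T ∧ ∀ a ∈ T, ∀ b ∈ T, a * b ∈ T :=
  suppPerfect_locallyFinite_general supp h1 hfin hSF F hF
end

section
/- Let S be a semigroup with semi-Zariski topology Ζ, the topology generated by the subbase consisting of the sets {x ∈ S : a·x·b ≠ c} and {x ∈ S : a·x·b ≠ c·x·d}, where a, b, c, d range over S¹ = S with an external identity adjoined. Then Ζ is coarser than (contained in) every Hausdorff shift-invariant topology on S. -/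
/-!
For `a, b ∈ S¹` the map `x ↦ a * x * b` never hits the adjoined identity and is a composite of
shifts, so it is a continuous self-map `f` of `S`. Hence `{x | a*x*b ≠ c}` is all of `S` when
`c = 1` and otherwise the preimage under `f` of the open set `{c}ᶜ`, while
`{x | a*x*b ≠ c*x*d}` is the complement of the equalizer of two such maps, which is closed
because the topology is Hausdorff.
-/

/-- The semi-Zariski topology on a semigroup `S`: generated by the subbase of sets
`{x | a*x*b ≠ c}` and `{x | a*x*b ≠ c*x*d}` with `a, b, c, d ∈ S¹` (here `S¹ = WithOne S`
is `S` with an external identity adjoined). -/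
def semiZariski (T : Type*) [Mul T] : TopologicalSpace T :=
  TopologicalSpace.generateFrom
    ({U : Set T | ∃ a b c : WithOne T, U = {x : T | a * (x : WithOne T) * b ≠ c}} ∪
     {U : Set T | ∃ a b c d : WithOne T,
        U = {x : T | a * (x : WithOne T) * b ≠ c * (x : WithOne T) * d}})

section ShiftInvariant

variable {S : Type*} [Mul S] [TopologicalSpace S]
  (hleft : ∀ a : S, Continuous (a * ·)) (hright : ∀ a : S, Continuous (· * a))
include hleft hright

theorem WithOne.exists_continuous_coe_eq_mul_coe_mul (a b : WithOne S) :
    ∃ f : S → S, Continuous f ∧ ∀ x : S, a * (x : WithOne S) * b = f x := by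
  induction a using WithOne.recOneCoe with
  | one =>
    induction b using WithOne.recOneCoe with
    | one => exact ⟨id, continuous_id, fun x => by simp⟩
    | coe b => exact ⟨(· * b), hright b, fun x => by simp⟩
  | coe a =>
    induction b using WithOne.recOneCoe with
    | one => exact ⟨(a * ·), hleft a, fun x => by simp⟩
    | coe b => exact ⟨(a * · * b), (hright b).comp (hleft a), fun x => by simp⟩

theorem isOpen_setOf_mul_coe_mul_ne [T1Space S] (a b c : WithOne S) :
    IsOpen {x : S | a * (x : WithOne S) * b ≠ c} := by
  obtain ⟨f, hf, hfx⟩ := WithOne.exists_continuous_coe_eq_mul_coe_mul hleft hright a b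
  induction c using WithOne.recOneCoe with
  | one =>
    simpa only [hfx, ne_eq, WithOne.coe_ne_one, not_false_eq_true, Set.ofPred_true] using
      isOpen_univ
  | coe c =>
    simp only [hfx, ne_eq, WithOne.coe_inj]
    exact isOpen_compl_singleton.preimage hf

theorem isOpen_setOf_mul_coe_mul_ne_mul_coe_mul [T2Space S] (a b c d : WithOne S) :
    IsOpen {x : S | a * (x : WithOne S) * b ≠ c * (x : WithOne S) * d} := by
  obtain ⟨f, hf, hfx⟩ := WithOne.exists_continuous_coe_eq_mul_coe_mul hleft hright a b
  obtain ⟨g, hg, hgx⟩ := WithOne.exists_continuous_coe_eq_mul_coe_mul hleft hright c d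
  simp only [hfx, hgx, ne_eq, WithOne.coe_inj]
  exact isOpen_ne_fun hf hg

theorem le_semiZariski [T2Space S] : ‹TopologicalSpace S› ≤ semiZariski S := by
  refine TopologicalSpace.le_generateFrom_iff_subset_isOpen.mpr ?_
  rintro _ (⟨a, b, c, rfl⟩ | ⟨a, b, c, d, rfl⟩)
  · exact isOpen_setOf_mul_coe_mul_ne hleft hright a b c
  · exact isOpen_setOf_mul_coe_mul_ne_mul_coe_mul hleft hright a b c d

end ShiftInvariant

/-- The semi-Zariski topology on a semigroup `S` is coarser than every Hausdorff
shift-invariant topology on `S`: every semi-Zariski-open set is open. -/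
theorem semiZariski_coarser_of_hausdorff_shift_invariant
    {S : Type*} [Semigroup S] (τ : TopologicalSpace S)
    (hT2 : @T2Space S τ)
    (hleft : ∀ a : S, @Continuous _ _ τ τ (fun x => a * x))
    (hright : ∀ a : S, @Continuous _ _ τ τ (fun x => x * a)) :
    ∀ U : Set S, @IsOpen S (semiZariski S) U → @IsOpen S τ U :=
  TopologicalSpace.le_def.mp (le_semiZariski hleft hright)
end

section
/- Let (S, supp) be a supp-perfect semigroup with support map supp : S → Set X, where X = ⋃_{a∈S} supp(a). Let f ∈ S, x ∈ supp(f), and let F ⊆ X∖{x} be a finite subset. Then either there exists g ∈ S with supp(g) ⊆ {x} and f·g ≠ g·f, or there exists an infinite set 𝔽 ⊆ {g ∈ S : supp(g) ⊆ X∖F and f·g ≠ g·f} such that for any two distinct elements g, h ∈ 𝔽 one has supp(g) ∩ supp(h) ⊆ {x} and supp(g) ≠ {x} and supp(g) ⊄ {x} (i.e., supp(g)∖{x} ≠ ∅). -/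
/-!
Suppose every `g` with `supp g ⊆ {x}` commutes with `f`. For a finite `G ∌ x`, supp-perfectness
says that `f`, whose support is not inside `G`, fails to commute with some `g` supported off `G`;
by the assumption, `supp g ⊄ {x}`. Taking `G` to contain `F` and the parts outside `x` of the
supports already chosen, this produces, one element at a time, an infinite family whose supports
are pairwise disjoint away from `x`.
-/

section

open Function

variable {ι α : Type*}

theorem exists_infinite_pairwiseDisjoint_of_forall_finite (s : ι → Set α) (P : ι → Prop)
    (h : ∀ G : Set α, G.Finite → ∃ i, P i ∧ (s i).Finite ∧ (s i).Nonempty ∧ Disjoint (s i) G) :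
    ∃ T : Set ι, T.Infinite ∧ (∀ i ∈ T, P i ∧ (s i).Nonempty) ∧ T.PairwiseDisjoint s := by
  classical
  choose pick hP hfin hne hdisj using fun G : Finset α => h G G.finite_toSet
  let step : Finset α → Finset α := fun G => G ∪ (hfin G).toFinset
  let G : ℕ → Finset α := fun n => step^[n] ∅
  let u : ℕ → ι := fun n => pick (G n)
  have hG_mono : Monotone G := monotone_nat_of_le_succ fun n => by
    simp only [G, iterate_succ_apply']
    exact Finset.subset_union_left
  have hu_subset : ∀ ⦃m n : ℕ⦄, m < n → s (u m) ⊆ ↑(G n) := by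
    intro m n hmn
    have hsucc : s (u m) ⊆ ↑(G (m + 1)) := by simp [G, u, step, iterate_succ_apply']
    exact hsucc.trans (Finset.coe_subset.2 (hG_mono hmn))
  have hu_disj : Pairwise (Disjoint on s ∘ u) :=
    (pairwise_disjoint_on _).2 fun m n hmn => (hdisj (G n)).symm.mono_left (hu_subset hmn)
  have hu_inj : u.Injective := pairwise_ne_iff_injective.1 fun m n hmn huv =>
    (hne (G n)).ne_empty (by simpa [onFun, huv] using hu_disj hmn)
  refine ⟨Set.range u, Set.infinite_range_of_injective hu_inj, ?_,
    hu_disj.range_pairwise (r := Disjoint on s)⟩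
  rintro _ ⟨n, rfl⟩
  exact ⟨hP _, hne _⟩

end

theorem exists_mul_ne_of_not_subset {S X : Type*} [Mul S] (supp : S → Set X) {G : Set X}
    (hG : {g : S | ∀ f : S, supp f ⊆ Gᶜ → f * g = g * f} ⊆ {f : S | supp f ⊆ G})
    {f : S} (hf : ¬ supp f ⊆ G) : ∃ g : S, supp g ⊆ Gᶜ ∧ f * g ≠ g * f := by
  by_contra! hcomm
  exact hf (hG fun g hg => (hcomm g hg).symm)

theorem suppPerfect_lemma_one_general
    {S X : Type*} [Semigroup S] (supp : S → Set X)
    (hfin : ∀ f : S, (supp f).Finite)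
    (hperf : ∀ F : Set X, F.Finite →
      {f : S | supp f ⊆ F} = {g : S | ∀ f : S, supp f ⊆ Fᶜ → f * g = g * f})
    (f : S) (x : X) (hx : x ∈ supp f)
    (F : Set X) (hFfin : F.Finite) (hxF : x ∉ F) :
    (∃ g : S, supp g ⊆ {x} ∧ f * g ≠ g * f) ∨
    (∃ 𝓕 : Set S, 𝓕.Infinite ∧
      (∀ g ∈ 𝓕, supp g ⊆ Fᶜ ∧ f * g ≠ g * f) ∧
      (∀ g ∈ 𝓕, ∀ h ∈ 𝓕, g ≠ h →
        supp g ∩ supp h ⊆ {x} ∧ supp g ≠ {x} ∧ ¬ supp g ⊆ {x})) := by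
  refine or_iff_not_imp_left.2 fun hcomm => ?_
  push Not at hcomm
  have hfresh : ∀ G : Set X, G.Finite → ∃ g, (supp g ⊆ Fᶜ ∧ f * g ≠ g * f) ∧
      (supp g \ {x}).Finite ∧ (supp g \ {x}).Nonempty ∧ Disjoint (supp g \ {x}) G := by
    intro G hG
    obtain ⟨g, hgH, hfg⟩ := exists_mul_ne_of_not_subset supp
      (hperf _ ((hG.union hFfin).sdiff (t := {x}))).superset fun h => (h hx).2 rfl
    have hgx : (supp g \ {x}).Nonempty := Set.sdiff_nonempty.2 fun h => hfg (hcomm g h)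
    refine ⟨g, ⟨fun y hy hyF => ?_, hfg⟩, (hfin g).sdiff, hgx, ?_⟩
    · exact hgH hy ⟨Or.inr hyF, fun hyx => hxF (hyx ▸ hyF)⟩
    · exact Set.disjoint_left.2 fun y hy hyG => hgH hy.1 ⟨Or.inl hyG, hy.2⟩
  obtain ⟨𝓕, h𝓕_inf, h𝓕, h𝓕_disj⟩ := exists_infinite_pairwiseDisjoint_of_forall_finite _ _ hfresh
  refine ⟨𝓕, h𝓕_inf, fun g hg => (h𝓕 g hg).1, fun g hg h hh hgh => ?_⟩
  have hgx : ¬ supp g ⊆ {x} := Set.sdiff_nonempty.1 (h𝓕 g hg).2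
  refine ⟨fun y hy => ?_, fun h => hgx h.subset, hgx⟩
  by_contra hyx
  exact Set.disjoint_left.1 (h𝓕_disj hg hh hgh) ⟨hy.1, hyx⟩ ⟨hy.2, hyx⟩

/-- In a supp-perfect semigroup, for `f ∈ S`, `x ∈ supp f` and a finite `F ⊆ X∖{x}`, either
some `g` with `supp g ⊆ {x}` fails to commute with `f`, or there is an infinite family
`𝓕` of elements `g` with `supp g ⊆ X∖F` not commuting with `f`, whose supports pairwise
meet only in `x`, with `supp g ≠ {x}` and `supp g ⊄ {x}`. -/
theorem suppPerfect_lemma_one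
    {S X : Type*} [Semigroup S] (supp : S → Set X)
    (h1 : ∀ f g : S, supp (f * g) ⊆ supp f ∪ supp g)
    (h2 : ∀ f g : S, supp f ∩ supp g = ∅ → f * g = g * f)
    (hX : (⋃ a : S, supp a) = Set.univ)
    (hfin : ∀ f : S, (supp f).Finite)
    (hSF : ∀ F : Set X, F.Finite → {f : S | supp f ⊆ F}.Finite)
    (hperf : ∀ F : Set X, F.Finite →
      {f : S | supp f ⊆ F} = {g : S | ∀ f : S, supp f ⊆ Fᶜ → f * g = g * f})
    (f : S) (x : X) (hx : x ∈ supp f)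
    (F : Set X) (hFfin : F.Finite) (hxF : x ∉ F) :
    (∃ g : S, supp g ⊆ {x} ∧ f * g ≠ g * f) ∨
    (∃ 𝓕 : Set S, 𝓕.Infinite ∧
      (∀ g ∈ 𝓕, supp g ⊆ Fᶜ ∧ f * g ≠ g * f) ∧
      (∀ g ∈ 𝓕, ∀ h ∈ 𝓕, g ≠ h →
        supp g ∩ supp h ⊆ {x} ∧ supp g ≠ {x} ∧ ¬ supp g ⊆ {x})) :=
  suppPerfect_lemma_one_general supp hfin hperf f x hx F hFfin hxF
end

section
/- Let (S, supp) be a supp-perfect semigroup with support map supp : S → Set X, where X = ⋃_{a∈S} supp(a), and endow S with the semi-Zariski topology Ζ. Then for every n ∈ ℕ and every f ∈ S there is a Ζ-open neighborhood O of f such that every g ∈ O with |supp(g)| ≤ n satisfies supp(f) ⊆ supp(g). -/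
/-! Fix `x ∈ supp f`. Since `f ∉ S(F \ {x})` for every finite `F`, supp-perfectness yields an
element not commuting with `f` whose support meets `F` at most in `x`; iterating, we get
`h₀, …, hₙ` not commuting with `f` whose supports pairwise meet at most in `x`. Let `O` be the set
of elements commuting with none of these `hᵢ` (over the finitely many `x ∈ supp f`): it is
semi-Zariski open and contains `f`. If `g ∈ O` misses `x`, then each `supp hᵢ` meets `supp g`
(disjoint supports commute) away from `x`, producing `n + 1` distinct points of `supp g`. -/

open Function

theorem isOpen_setOf_mul_ne_mul {T : Type*} [Mul T] (a b : T) :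
    @IsOpen T (semiZariski T) {x : T | a * x ≠ x * b} := by
  have h : {x : T | a * x ≠ x * b} =
      {x : T | (a : WithOne T) * (x : WithOne T) * 1 ≠ 1 * (x : WithOne T) * b} := by
    simp only [mul_one, one_mul, ← WithOne.coe_mul, ne_eq, WithOne.coe_inj]
  rw [h]
  exact .basic _ (Or.inr ⟨a, 1, 1, b, rfl⟩)

theorem Pairwise.disjoint_snoc {S X : Type*} {m : ℕ} {t : S → Set X} {h : Fin m → S} {a : S}
    (hh : Pairwise (Disjoint on t ∘ h)) (ha : ∀ i, Disjoint (t a) (t (h i))) :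
    Pairwise (Disjoint on t ∘ (Fin.snoc h a : Fin (m + 1) → S)) := by
  intro i j hij
  induction i using Fin.lastCases with
  | last =>
    induction j using Fin.lastCases with
    | last => exact absurd rfl hij
    | cast j => simpa [onFun] using ha j
  | cast i =>
    induction j using Fin.lastCases with
    | last => simpa [onFun] using (ha i).symm
    | cast j => simpa [onFun] using hh fun e => hij (congrArg Fin.castSucc e)

theorem exists_fin_pairwise_disjoint {S X : Type*} (P : S → Prop) (t : S → Set X)
    (ht : ∀ a, (t a).Finite) (havoid : ∀ F : Set X, F.Finite → ∃ a, P a ∧ Disjoint (t a) F) :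
    ∀ m : ℕ, ∃ h : Fin m → S, (∀ i, P (h i)) ∧ Pairwise (Disjoint on t ∘ h)
  | 0 => ⟨Fin.elim0, fun i => i.elim0, fun i => i.elim0⟩
  | m + 1 => by
    obtain ⟨h, hP, hdisj⟩ := exists_fin_pairwise_disjoint P t ht havoid m
    obtain ⟨a, haP, ha⟩ := havoid (⋃ i, t (h i)) (Set.finite_iUnion fun i => ht (h i))
    refine ⟨Fin.snoc h a, Fin.lastCases (by simpa using haP) (by simpa using hP), ?_⟩
    exact hdisj.disjoint_snoc fun i => ha.mono_right (Set.subset_iUnion (t ∘ h) i)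

theorem card_le_encard_of_pairwise_disjoint {ι α : Type*} {t : ι → Set α} {s : Set α}
    (hdisj : Pairwise (Disjoint on t)) (hmeet : ∀ i, (t i ∩ s).Nonempty) :
    ENat.card ι ≤ s.encard := by
  choose y hy using hmeet
  have hinj : y.Injective := fun i j hij => by_contra fun hne =>
    Set.disjoint_left.mp (hdisj hne) (hy i).1 (hij ▸ (hy j).1)
  exact hinj.encard_range.trans (Set.encard_le_encard (Set.range_subset_iff.mpr fun i => (hy i).2))

theorem exists_not_commute_of_not_subset {S X : Type*} [Mul S] {supp : S → Set X}
    (hperf : ∀ F : Set X, F.Finite →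
      {f : S | supp f ⊆ F} = {g : S | ∀ f : S, supp f ⊆ Fᶜ → f * g = g * f})
    {f : S} {F : Set X} (hF : F.Finite) (hf : ¬ supp f ⊆ F) :
    ∃ h : S, supp h ⊆ Fᶜ ∧ h * f ≠ f * h := by
  have : f ∉ {g : S | supp g ⊆ F} := hf
  simpa [hperf F hF] using this

theorem suppPerfect_lemma_two_general
    {S X : Type*} [Semigroup S] (supp : S → Set X)
    (h2 : ∀ f g : S, supp f ∩ supp g = ∅ → f * g = g * f)
    (hfin : ∀ f : S, (supp f).Finite)
    (hperf : ∀ F : Set X, F.Finite →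
      {f : S | supp f ⊆ F} = {g : S | ∀ f : S, supp f ⊆ Fᶜ → f * g = g * f})
    (n : ℕ) (f : S) :
    ∃ O : Set S, @IsOpen S (semiZariski S) O ∧ f ∈ O ∧
      ∀ g ∈ O, (supp g).encard ≤ (n : ℕ∞) → supp f ⊆ supp g := by
  have hwitness (x : supp f) : ∃ h : Fin (n + 1) → S, (∀ i, h i * f ≠ f * h i) ∧
      Pairwise (Disjoint on fun i => supp (h i) \ {x.1}) := by
    refine exists_fin_pairwise_disjoint (fun a => a * f ≠ f * a) (fun a => supp a \ {x.1})
      (fun a => (hfin a).sdiff) (fun F hF => ?_) (n + 1)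
    obtain ⟨a, ha, hne⟩ := exists_not_commute_of_not_subset hperf (hF.sdiff (t := {x.1}))
      fun hsub => (hsub x.2).2 rfl
    exact ⟨a, hne, Set.disjoint_left.mpr fun y hy hyF => ha hy.1 ⟨hyF, hy.2⟩⟩
  choose H hH using hwitness
  let _ : TopologicalSpace S := semiZariski S
  have _ : Finite (supp f) := (hfin f).to_subtype
  refine ⟨⋂ x, ⋂ i, {g | H x i * g ≠ g * H x i},
    isOpen_iInter_of_finite fun x => isOpen_iInter_of_finite fun i => isOpen_setOf_mul_ne_mul _ _,
    Set.mem_iInter₂.mpr fun x i => (hH x).1 i, fun g hg hcard x hxf => by_contra fun hxg => ?_⟩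
  have hmeet (i : Fin (n + 1)) : ((supp (H ⟨x, hxf⟩ i) \ {x}) ∩ supp g).Nonempty := by
    obtain ⟨y, hy⟩ := Set.nonempty_iff_ne_empty.mpr
      (mt (h2 _ g) (Set.mem_iInter₂.mp hg ⟨x, hxf⟩ i))
    exact ⟨y, ⟨hy.1, fun hyx => hxg (hyx ▸ hy.2)⟩, hy.2⟩
  have hle := (card_le_encard_of_pairwise_disjoint (hH ⟨x, hxf⟩).2 hmeet).trans hcard
  rw [ENat.card_eq_coe_fintype_card, Fintype.card_fin] at hle
  norm_cast at hle
  omega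

/-- In a supp-perfect semigroup with the semi-Zariski topology, every `f` has an open
neighborhood `O` such that every `g ∈ O` with `|supp g| ≤ n` satisfies `supp f ⊆ supp g`. -/
theorem suppPerfect_lemma_two
    {S X : Type*} [Semigroup S] (supp : S → Set X)
    (h1 : ∀ f g : S, supp (f * g) ⊆ supp f ∪ supp g)
    (h2 : ∀ f g : S, supp f ∩ supp g = ∅ → f * g = g * f)
    (hX : (⋃ a : S, supp a) = Set.univ)
    (hfin : ∀ f : S, (supp f).Finite)
    (hSF : ∀ F : Set X, F.Finite → {f : S | supp f ⊆ F}.Finite)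
    (hperf : ∀ F : Set X, F.Finite →
      {f : S | supp f ⊆ F} = {g : S | ∀ f : S, supp f ⊆ Fᶜ → f * g = g * f})
    (n : ℕ) (f : S) :
    ∃ O : Set S, @IsOpen S (semiZariski S) O ∧ f ∈ O ∧
      ∀ g ∈ O, (supp g).encard ≤ (n : ℕ∞) → supp f ⊆ supp g :=
  suppPerfect_lemma_two_general supp h2 hfin hperf n f
end

section
/- Let (S, supp) be a supp-perfect semigroup with support map supp : S → Set X, where X = ⋃_{a∈S} supp(a), and endow S with the semi-Zariski topology Ζ. Then for every n ∈ ℕ the set S_{≤n} = {f ∈ S : |supp(f)| ≤ n} is closed in (S, Ζ). -/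
open Set

theorem isClosed_setOf_commute {T : Type*} [Mul T] (t : T) :
    @IsClosed T (semiZariski T) {x | Commute t x} := by
  rw [← @isOpen_compl_iff]
  apply TopologicalSpace.isOpen_generateFrom_of_mem
  refine Or.inr ⟨(t : WithOne T), 1, 1, (t : WithOne T), ?_⟩
  ext x
  simp [Commute, SemiconjBy, ← WithOne.coe_mul, WithOne.coe_inj]

section SuppSemigroup

variable {S X : Type*} [Mul S] {supp : S → Set X}

theorem finsetCard_le_encard_supp_of_not_commute
    (h2 : ∀ f g : S, supp f ∩ supp g = ∅ → f * g = g * f)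
    {T : Finset S} (hT : (T : Set S).PairwiseDisjoint supp) {x : S}
    (hx : ∀ t ∈ T, ¬Commute t x) : (T.card : ℕ∞) ≤ (supp x).encard := by
  have hmeet : ∀ t ∈ T, (supp t ∩ supp x).Nonempty := fun t ht =>
    nonempty_iff_ne_empty.2 fun h => hx t ht (h2 t x h)
  obtain rfl | ⟨t₀, ht₀⟩ := T.eq_empty_or_nonempty
  · simp
  have : Nonempty X := ⟨(hmeet t₀ ht₀).some⟩
  choose! p hp using hmeet
  have hinj : InjOn p T := fun t ht u hu htu => hT.elim ht hu <|
    not_disjoint_iff.2 ⟨p t, (hp t ht).1, htu ▸ (hp u hu).1⟩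
  calc (T.card : ℕ∞) = (p '' T).encard := by
        rw [hinj.encard_image, encard_coe_eq_coe_finsetCard]
    _ ≤ (supp x).encard := encard_le_encard <| image_subset_iff.2 fun t ht => (hp t ht).2

theorem exists_supp_subset_compl_not_commute
    (hcent : ∀ F : Set X, F.Finite →
      {g : S | ∀ f : S, supp f ⊆ Fᶜ → f * g = g * f} ⊆ {f : S | supp f ⊆ F})
    {F : Set X} (hF : F.Finite) {x : S} (hx : ¬supp x ⊆ F) :
    ∃ f, supp f ⊆ Fᶜ ∧ ¬Commute f x := by
  by_contra! hcomm
  exact hx (hcent F hF fun f hf => hcomm f hf)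

/-- The last conjunct is the invariant that leaves room for the next element: the supports
chosen so far cover at most `k` points of `supp x`. -/
theorem exists_finset_pairwiseDisjoint_not_commute
    (h2 : ∀ f g : S, supp f ∩ supp g = ∅ → f * g = g * f)
    (hfin : ∀ f : S, (supp f).Finite)
    (hcent : ∀ F : Set X, F.Finite →
      {g : S | ∀ f : S, supp f ⊆ Fᶜ → f * g = g * f} ⊆ {f : S | supp f ⊆ F})
    (x : S) (k : ℕ) (hk : (k : ℕ∞) ≤ (supp x).encard) :
    ∃ T : Finset S, T.card = k ∧ (T : Set S).PairwiseDisjoint supp ∧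
      (∀ t ∈ T, ¬Commute t x) ∧ (supp x ∩ ⋃ t ∈ T, supp t).encard ≤ k := by
  classical
  induction k with
  | zero => exact ⟨∅, by simp⟩
  | succ k ih =>
    obtain ⟨T, hcard, hdisj, hT, hcover⟩ := ih (le_trans (by norm_cast; omega) hk)
    set U := ⋃ t ∈ T, supp t
    obtain ⟨p, hpx, hpU⟩ : (supp x \ U).Nonempty := by
      rw [sdiff_nonempty]
      intro hxU
      rw [inter_eq_left.2 hxU] at hcover
      exact absurd (hk.trans hcover) (by norm_cast; omega)
    have hFfin : (U ∪ (supp x \ {p})).Finite :=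
      (T.finite_toSet.biUnion fun t _ => hfin t).union (hfin x).sdiff
    obtain ⟨f, hfF, hf⟩ :=
      exists_supp_subset_compl_not_commute hcent hFfin fun h => (h hpx).elim hpU fun h' => h'.2 rfl
    have hfU : Disjoint (supp f) U :=
      (subset_compl_iff_disjoint_right.1 hfF).mono_right subset_union_left
    have hfT : f ∉ T := fun hfT => hf <| h2 f x <| by
      rw [disjoint_self.1 (hfU.mono_right (subset_biUnion_of_mem (u := supp) hfT)), bot_eq_empty,
        empty_inter]
    refine ⟨insert f T, by rw [Finset.card_insert_of_notMem hfT, hcard], ?_, ?_, ?_⟩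
    · rw [Finset.coe_insert]
      exact hdisj.insert fun t ht _ => hfU.mono_right (subset_biUnion_of_mem (u := supp) ht)
    · simpa [hf] using hT
    · have hfx : supp x ∩ supp f ⊆ {p} := fun q ⟨hqx, hqf⟩ => by
        by_contra hqp
        exact hfF hqf (Or.inr ⟨hqx, hqp⟩)
      calc (supp x ∩ ⋃ t ∈ insert f T, supp t).encard
          ≤ (insert p (supp x ∩ U)).encard := by
            refine encard_le_encard ?_
            rw [Finset.set_biUnion_insert, inter_union_distrib_left]
            exact union_subset (hfx.trans (singleton_subset_iff.2 (mem_insert _ _)))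
              (subset_insert _ _)
        _ ≤ k + 1 := (encard_insert_le _ _).trans (by gcongr)

theorem setOf_encard_supp_le_eq_iInter
    (h2 : ∀ f g : S, supp f ∩ supp g = ∅ → f * g = g * f)
    (hfin : ∀ f : S, (supp f).Finite)
    (hcent : ∀ F : Set X, F.Finite →
      {g : S | ∀ f : S, supp f ⊆ Fᶜ → f * g = g * f} ⊆ {f : S | supp f ⊆ F})
    (n : ℕ) :
    {f : S | (supp f).encard ≤ n} = ⋂ (T : Finset S) (_ : T.card = n + 1)
      (_ : (T : Set S).PairwiseDisjoint supp), ⋃ t ∈ T, {x | Commute t x} := by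
  ext x
  simp only [mem_ofPred_eq, mem_iInter, mem_iUnion, exists_prop]
  constructor
  · intro hx T hcard hT
    by_contra! hnc
    have := (finsetCard_le_encard_supp_of_not_commute h2 hT hnc).trans hx
    rw [hcard] at this
    exact absurd this (by norm_cast; omega)
  · intro hx
    by_contra! hlt
    obtain ⟨T, hcard, hT, hnc, -⟩ := exists_finset_pairwiseDisjoint_not_commute h2 hfin hcent x
      (n + 1) (by exact_mod_cast Order.add_one_le_of_lt hlt)
    obtain ⟨t, ht, htx⟩ := hx T hcard hT
    exact hnc t ht htx

end SuppSemigroup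

theorem suppPerfect_le_n_closed_general
    {S X : Type*} [Semigroup S] (supp : S → Set X)
    (h2 : ∀ f g : S, supp f ∩ supp g = ∅ → f * g = g * f)
    (hfin : ∀ f : S, (supp f).Finite)
    (hperf : ∀ F : Set X, F.Finite →
      {f : S | supp f ⊆ F} = {g : S | ∀ f : S, supp f ⊆ Fᶜ → f * g = g * f})
    (n : ℕ) :
    @IsClosed S (semiZariski S) {f : S | (supp f).encard ≤ (n : ℕ∞)} := by
  let := semiZariski S
  rw [setOf_encard_supp_le_eq_iInter h2 hfin (fun F hF => (hperf F hF).ge) n]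
  exact isClosed_iInter fun T => isClosed_iInter fun _ => isClosed_iInter fun _ =>
    isClosed_biUnion_finset fun t _ => isClosed_setOf_commute t

/-- In a supp-perfect semigroup with the semi-Zariski topology, the set
`S_{≤n} = {f : |supp f| ≤ n}` is closed. -/
theorem suppPerfect_le_n_closed
    {S X : Type*} [Semigroup S] (supp : S → Set X)
    (h1 : ∀ f g : S, supp (f * g) ⊆ supp f ∪ supp g)
    (h2 : ∀ f g : S, supp f ∩ supp g = ∅ → f * g = g * f)
    (hX : (⋃ a : S, supp a) = Set.univ)
    (hfin : ∀ f : S, (supp f).Finite)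
    (hSF : ∀ F : Set X, F.Finite → {f : S | supp f ⊆ F}.Finite)
    (hperf : ∀ F : Set X, F.Finite →
      {f : S | supp f ⊆ F} = {g : S | ∀ f : S, supp f ⊆ Fᶜ → f * g = g * f})
    (n : ℕ) :
    @IsClosed S (semiZariski S) {f : S | (supp f).encard ≤ (n : ℕ∞)} :=
  suppPerfect_le_n_closed_general supp h2 hfin hperf n
end

section
/- Let (S, supp) be a supp-perfect semigroup with support map supp : S → Set X, where X = ⋃_{a∈S} supp(a), and endow S with the semi-Zariski topology Ζ. Then for every n ∈ ℕ the set S_{=n} = {f ∈ S : |supp(f)| = n} is discrete in its subspace topology inherited from (S, Ζ). -/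
open Set Topology

section SemiZariski

variable {T : Type*} [Mul T]

lemma semiZariski_isOpen_ne (g : T) : IsOpen[semiZariski T] {x | x ≠ g} :=
  .basic _ <| .inl ⟨1, 1, g, by ext x; simp⟩

lemma semiZariski_isOpen_not_commute (h : T) : IsOpen[semiZariski T] {x | h * x ≠ x * h} :=
  .basic _ <| .inr ⟨h, 1, 1, h, by ext x; simp [← WithOne.coe_mul]⟩

lemma semiZariski_t1Space : @T1Space T (semiZariski T) :=
  let := semiZariski T
  ⟨fun g => ⟨by simpa [compl_def] using semiZariski_isOpen_ne g⟩⟩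

end SemiZariski

section SuppSemigroup

variable {S X : Type*} [Semigroup S] {supp : S → Set X}

lemma exists_finset_not_commute_le_encard
    (hcomm : ∀ f g : S, supp f ∩ supp g = ∅ → f * g = g * f) (hfin : ∀ f, (supp f).Finite)
    (hcent : ∀ F : Set X, F.Finite → ∀ g : S, (∀ f, supp f ⊆ Fᶜ → f * g = g * f) → supp g ⊆ F)
    {f : S} {p : X} (hp : p ∈ supp f) (k : ℕ) :
    ∃ W : Finset S, (∀ h ∈ W, h * f ≠ f * h) ∧
      ∀ x, p ∉ supp x → (∀ h ∈ W, h * x ≠ x * h) → k ≤ (supp x ∩ ⋃ h ∈ W, supp h).encard := by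
  classical
  induction k with
  | zero => exact ⟨∅, by simp, by simp⟩
  | succ k ih =>
    obtain ⟨W, hWf, hWx⟩ := ih
    have hG : ((⋃ h ∈ W, supp h) \ {p}).Finite := (W.finite_toSet.biUnion fun h _ => hfin h).sdiff
    obtain ⟨h', hh'G, hh'f⟩ :
        ∃ h', supp h' ⊆ ((⋃ h ∈ W, supp h) \ {p})ᶜ ∧ h' * f ≠ f * h' := by
      -- otherwise supp-perfectness puts `f` in `S(G)`, although `p ∈ supp f \ G`
      by_contra! hcent_f
      exact (hcent _ hG f hcent_f hp).2 rfl
    refine ⟨insert h' W, Finset.forall_mem_insert _ _ _ |>.2 ⟨hh'f, hWf⟩, fun x hpx hx => ?_⟩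
    rw [Finset.forall_mem_insert] at hx
    have hnew : (supp x ∩ supp h').Nonempty := by
      rw [nonempty_iff_ne_empty, inter_comm]
      exact fun he => hx.1 (hcomm h' x he)
    have hdisj : Disjoint (supp x ∩ supp h') (supp x ∩ ⋃ h ∈ W, supp h) := by
      rw [disjoint_left]
      rintro q ⟨hqx, hqh'⟩ ⟨-, hqW⟩
      exact hh'G hqh' ⟨hqW, fun hqp => hpx (hqp ▸ hqx)⟩
    calc ((k + 1 : ℕ) : ℕ∞) = 1 + k := by push_cast; ring
      _ ≤ (supp x ∩ supp h').encard + (supp x ∩ ⋃ h ∈ W, supp h).encard :=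
        add_le_add (one_le_encard_iff_nonempty.2 hnew) (hWx x hpx hx.2)
      _ = (supp x ∩ ⋃ h ∈ insert h' W, supp h).encard := by
        rw [← encard_union_eq hdisj, ← inter_union_distrib_left, Finset.set_biUnion_insert]

lemma exists_semiZariski_isOpen_forall_encard_le_eq
    (hcomm : ∀ f g : S, supp f ∩ supp g = ∅ → f * g = g * f) (hfin : ∀ f, (supp f).Finite)
    (hSF : ∀ F : Set X, F.Finite → {f : S | supp f ⊆ F}.Finite)
    (hcent : ∀ F : Set X, F.Finite → ∀ g : S, (∀ f, supp f ⊆ Fᶜ → f * g = g * f) → supp g ⊆ F)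
    (f : S) :
    ∃ U : Set S, IsOpen[semiZariski S] U ∧ f ∈ U ∧
      ∀ x ∈ U, (supp x).encard ≤ (supp f).encard → x = f := by
  let := semiZariski S
  have := semiZariski_t1Space (T := S)
  have hF := hfin f
  choose! W hWf hWx using fun p (hp : p ∈ supp f) =>
    exists_finset_not_commute_le_encard hcomm hfin hcent hp ((supp f).ncard + 1)
  refine ⟨({g | supp g ⊆ supp f} \ {f})ᶜ ∩ ⋂ p ∈ supp f, ⋂ h ∈ W p, {x | h * x ≠ x * h},
    ?_, ⟨fun hf => hf.2 rfl, mem_iInter₂.2 fun p hp => mem_iInter₂.2 (hWf p hp)⟩, ?_⟩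
  · exact ((hSF _ hF).sdiff.isClosed.isOpen_compl).inter <| hF.isOpen_biInter fun p _ =>
      isOpen_biInter_finset fun h _ => semiZariski_isOpen_not_commute h
  rintro x ⟨hxF, hxW⟩ hxf
  have hsub : supp f ⊆ supp x := fun p hp => by
    by_contra hpx
    have hle := (hWx p hp x hpx fun h hh => mem_iInter₂.1 (mem_iInter₂.1 hxW p hp) h hh).trans
      ((encard_le_encard inter_subset_left).trans hxf)
    rw [← hF.cast_ncard_eq] at hle
    exact absurd hle (by norm_cast; omega)
  by_contra hne
  exact hxF ⟨((hfin x).eq_of_subset_of_encard_le' hsub hxf).ge, hne⟩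

end SuppSemigroup

theorem suppPerfect_eq_n_discrete_general
    {S X : Type*} [Semigroup S] (supp : S → Set X)
    (h2 : ∀ f g : S, supp f ∩ supp g = ∅ → f * g = g * f)
    (hfin : ∀ f : S, (supp f).Finite)
    (hSF : ∀ F : Set X, F.Finite → {f : S | supp f ⊆ F}.Finite)
    (hperf : ∀ F : Set X, F.Finite →
      {f : S | supp f ⊆ F} = {g : S | ∀ f : S, supp f ⊆ Fᶜ → f * g = g * f})
    (n : ℕ) :
    @DiscreteTopology {f : S | (supp f).encard = (n : ℕ∞)}
      (TopologicalSpace.induced Subtype.val (semiZariski S)) := by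
  let := semiZariski S
  refine discreteTopology_iff_isOpen_singleton.2 fun ⟨f, hf⟩ => ?_
  obtain ⟨U, hU, hfU, hUf⟩ := exists_semiZariski_isOpen_forall_encard_le_eq h2 hfin hSF
    (fun F hF g hg => (hperf F hF).symm.subset hg) f
  refine isOpen_induced_iff.2 ⟨U, hU, ?_⟩
  ext ⟨x, hx⟩
  simp only [mem_preimage, mem_singleton_iff, Subtype.mk.injEq]
  exact ⟨fun hxU => hUf x hxU (hx.trans hf.symm).le, fun hxf => hxf ▸ hfU⟩

/-- In a supp-perfect semigroup with the semi-Zariski topology, the set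
`S_{=n} = {f : |supp f| = n}` is discrete in its subspace topology. -/
theorem suppPerfect_eq_n_discrete
    {S X : Type*} [Semigroup S] (supp : S → Set X)
    (h1 : ∀ f g : S, supp (f * g) ⊆ supp f ∪ supp g)
    (h2 : ∀ f g : S, supp f ∩ supp g = ∅ → f * g = g * f)
    (hX : (⋃ a : S, supp a) = Set.univ)
    (hfin : ∀ f : S, (supp f).Finite)
    (hSF : ∀ F : Set X, F.Finite → {f : S | supp f ⊆ F}.Finite)
    (hperf : ∀ F : Set X, F.Finite →
      {f : S | supp f ⊆ F} = {g : S | ∀ f : S, supp f ⊆ Fᶜ → f * g = g * f})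
    (n : ℕ) :
    @DiscreteTopology {f : S | (supp f).encard = (n : ℕ∞)}
      (TopologicalSpace.induced Subtype.val (semiZariski S)) :=
  suppPerfect_eq_n_discrete_general supp h2 hfin hSF hperf n
end

section
/- Let (S, supp) be a supp-perfect semigroup with support map supp : S → Set X, where X = ⋃_{a∈S} supp(a). Then S is σ-discrete in every Hausdorff shift-invariant topology on S. -/
open Filter Topology Set

theorem sigmaDiscrete_of_forall_discreteTopology_fiber {S : Type*} [τ : TopologicalSpace S]
    (φ : S → ℕ) (h : ∀ n, DiscreteTopology (φ ⁻¹' {n})) : SigmaDiscrete τ :=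
  ⟨fun n => φ ⁻¹' {n}, by ext x; simp, h⟩

theorem ncard_inter_lt_ncard_inter_union {X : Type*} {A G H : Set X} (hA : A.Finite)
    (hAH : ¬ A ∩ H ⊆ G) : (A ∩ G).ncard < (A ∩ (G ∪ H)).ncard := by
  obtain ⟨z, ⟨hzA, hzH⟩, hzG⟩ := not_subset.mp hAH
  refine ncard_lt_ncard ((ssubset_iff_of_subset ?_).2 ⟨z, ⟨hzA, .inr hzH⟩, fun hz => hzG hz.2⟩)
    (hA.inter_of_left _)
  exact inter_subset_inter_right _ subset_union_left

section SuppPerfect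

variable {S X : Type*} [Mul S] {supp : S → Set X}

theorem exists_not_commute_of_not_supp_subset
    (hperf : ∀ F : Set X, F.Finite →
      {f : S | supp f ⊆ F} = {g : S | ∀ f : S, supp f ⊆ Fᶜ → Commute f g})
    {F : Set X} (hF : F.Finite) {f : S} (hf : ¬ supp f ⊆ F) :
    ∃ h, supp h ⊆ Fᶜ ∧ ¬ Commute h f := by
  have hf' : f ∉ {f : S | supp f ⊆ F} := hf
  rw [hperf F hF] at hf'
  simpa using hf'

variable [TopologicalSpace S] [T2Space S]

theorem isClosed_setOf_commute_s13 (hleft : ∀ a : S, Continuous (a * ·))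
    (hright : ∀ a : S, Continuous (· * a)) (h : S) : IsClosed {x | Commute h x} :=
  isClosed_eq (hleft h) (hright h)

variable (hcomm : ∀ f g : S, supp f ∩ supp g = ∅ → Commute f g)
  (hfin : ∀ f : S, (supp f).Finite)
  (hSF : ∀ F : Set X, F.Finite → {f : S | supp f ⊆ F}.Finite)
  (hperf : ∀ F : Set X, F.Finite →
    {f : S | supp f ⊆ F} = {g : S | ∀ f : S, supp f ⊆ Fᶜ → Commute f g})
  (hleft : ∀ a : S, Continuous (a * ·)) (hright : ∀ a : S, Continuous (· * a))
include hcomm hfin hperf hleft hright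

theorem eventually_mem_supp_or_ncard_supp_inter_succ_le {f : S} {j : ℕ}
    (ih : ∀ G : Set X, G.Finite → supp f ⊆ G →
      ∀ᶠ g in 𝓝[≠] f ⊓ 𝓟 {g | (supp g).ncard = (supp f).ncard},
        (supp g ∩ G).ncard + j ≤ (supp f).ncard)
    {G : Set X} (hG : G.Finite) (hfG : supp f ⊆ G) {y : X} (hy : y ∈ supp f) :
    ∀ᶠ g in 𝓝[≠] f ⊓ 𝓟 {g | (supp g).ncard = (supp f).ncard},
      y ∈ supp g ∨ (supp g ∩ G).ncard + (j + 1) ≤ (supp f).ncard := by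
  obtain ⟨h, hhG, hhf⟩ :=
    exists_not_commute_of_not_supp_subset hperf hG.sdiff fun hfG' => (hfG' hy).2 rfl
  have hnear : ∀ᶠ g in 𝓝 f, ¬ Commute h g :=
    (isClosed_setOf_commute_s13 hleft hright h).isOpen_compl.mem_nhds hhf
  filter_upwards [inf_le_left (a := 𝓝[≠] f) (nhdsWithin_le_nhds hnear),
    ih (G ∪ supp h) (hG.union (hfin h)) (hfG.trans subset_union_left)] with g hgh hg
  refine or_iff_not_imp_left.2 fun hyg => ?_
  have hgh_out : ¬ supp g ∩ supp h ⊆ G := by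
    intro hsub
    obtain ⟨z, hzh, hzg⟩ := nonempty_iff_ne_empty.2 (mt (hcomm h g) hgh)
    exact hhG hzh ⟨hsub ⟨hzg, hzh⟩, fun hzy => hyg (hzy ▸ hzg)⟩
  have := ncard_inter_lt_ncard_inter_union (hfin g) hgh_out
  omega

include hSF

theorem eventually_ncard_supp_inter_add_le (f : S) (j : ℕ) {G : Set X} (hG : G.Finite)
    (hfG : supp f ⊆ G) :
    ∀ᶠ g in 𝓝[≠] f ⊓ 𝓟 {g | (supp g).ncard = (supp f).ncard},
      (supp g ∩ G).ncard + j ≤ (supp f).ncard := by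
  induction j generalizing G with
  | zero =>
    filter_upwards [mem_inf_of_right (mem_principal_self _)] with g hg
    simpa [← hg] using ncard_le_ncard inter_subset_left (hfin g)
  | succ j ih =>
    have hoff : ∀ᶠ g in 𝓝[≠] f, g ∉ {g | supp g ⊆ G} :=
      mem_of_superset (nhdsNE_of_nhdsNE_sdiff_finite univ_mem (hSF G hG)) fun _ hg => hg.2
    have hstep := (eventually_all_finite (hfin f)).2 fun y hy =>
      eventually_mem_supp_or_ncard_supp_inter_succ_le hcomm hfin hperf hleft hright
        (fun G' hG' hfG' => ih hG' hfG') hG hfG hy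
    filter_upwards [inf_le_left (a := 𝓝[≠] f) hoff, mem_inf_of_right (mem_principal_self _),
      hstep] with g hgG hcard hg
    obtain ⟨y, hyf, hyg⟩ := not_subset.1 fun hfg : supp f ⊆ supp g =>
      hgG (eq_of_subset_of_ncard_le hfg hcard.le (hfin g) ▸ hfG)
    exact (hg y hyf).resolve_left hyg

theorem discreteTopology_setOf_ncard_supp_eq (n : ℕ) :
    DiscreteTopology {f : S | (supp f).ncard = n} := by
  refine discreteTopology_subtype_iff.2 fun f hf => ?_
  subst hf
  refine eventually_false_iff_eq_bot.1 ?_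
  filter_upwards [eventually_ncard_supp_inter_add_le hcomm hfin hSF hperf hleft hright f
    ((supp f).ncard + 1) (hfin f) subset_rfl] with g hg
  omega

end SuppPerfect

theorem suppPerfect_sigmaDiscrete_of_hausdorff_shift_invariant_general
    {S X : Type*} [Semigroup S] (supp : S → Set X)
    (h2 : ∀ f g : S, supp f ∩ supp g = ∅ → f * g = g * f)
    (hfin : ∀ f : S, (supp f).Finite)
    (hSF : ∀ F : Set X, F.Finite → {f : S | supp f ⊆ F}.Finite)
    (hperf : ∀ F : Set X, F.Finite →
      {f : S | supp f ⊆ F} = {g : S | ∀ f : S, supp f ⊆ Fᶜ → f * g = g * f})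
    (τ : TopologicalSpace S) (hT2 : @T2Space S τ)
    (hleft : ∀ a : S, @Continuous _ _ τ τ (fun x => a * x))
    (hright : ∀ a : S, @Continuous _ _ τ τ (fun x => x * a)) :
    SigmaDiscrete τ :=
  sigmaDiscrete_of_forall_discreteTopology_fiber (fun f => (supp f).ncard) fun n =>
    discreteTopology_setOf_ncard_supp_eq h2 hfin hSF hperf hleft hright n

/-- Every supp-perfect semigroup is σ-discrete in each Hausdorff shift-invariant topology. -/
theorem suppPerfect_sigmaDiscrete_of_hausdorff_shift_invariant
    {S X : Type*} [Semigroup S] (supp : S → Set X)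
    (h1 : ∀ f g : S, supp (f * g) ⊆ supp f ∪ supp g)
    (h2 : ∀ f g : S, supp f ∩ supp g = ∅ → f * g = g * f)
    (hX : (⋃ a : S, supp a) = Set.univ)
    (hfin : ∀ f : S, (supp f).Finite)
    (hSF : ∀ F : Set X, F.Finite → {f : S | supp f ⊆ F}.Finite)
    (hperf : ∀ F : Set X, F.Finite →
      {f : S | supp f ⊆ F} = {g : S | ∀ f : S, supp f ⊆ Fᶜ → f * g = g * f})
    (τ : TopologicalSpace S) (hT2 : @T2Space S τ)
    (hleft : ∀ a : S, @Continuous _ _ τ τ (fun x => a * x))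
    (hright : ∀ a : S, @Continuous _ _ τ τ (fun x => x * a)) :
    SigmaDiscrete τ :=
  suppPerfect_sigmaDiscrete_of_hausdorff_shift_invariant_general supp h2 hfin hSF hperf τ hT2 hleft
    hright
end

section
/- Let G be a group and supp : G → Set X a map making (G, supp) a supp-perfect semigroup with X = ⋃_{a∈G} supp(a). Then every Baire Hausdorff shift-invariant topology on G is discrete. -/
/-!
The sets `{g | #supp g ≤ n}` cover `G` and are closed: by perfectness, `#supp g > n` is witnessed
by `n + 1` elements with pairwise disjoint supports none of which commutes with `g`, and
centralizers are closed. By the Baire property one of them has nonempty interior `U`. Choose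
`u ∈ U` with `#supp u` maximal, and elements `f x` (`x ∈ supp u`) with pairwise disjoint supports
not commuting with `u`. An element of `U` commuting with no `f x` meets every `supp (f x)`, so by
maximality its support lies in `⋃ x, supp (f x)`; hence `u` has a finite neighbourhood, is
isolated, and the group is discrete by homogeneity.
-/

open Set Topology

namespace Set.PairwiseDisjoint

variable {ι α : Type*} {s : Finset ι} {A : ι → Set α} {B : Set α}

theorem card_le_ncard_of_inter_nonempty (hA : (s : Set ι).PairwiseDisjoint A) (hB : B.Finite)
    (hAB : ∀ i ∈ s, (A i ∩ B).Nonempty) : s.card ≤ B.ncard := by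
  rcases s.eq_empty_or_nonempty with rfl | ⟨i, hi⟩
  · simp
  have : Nonempty α := ⟨(hAB i hi).some⟩
  choose! z hz using hAB
  rw [← ncard_coe_finset]
  refine ncard_le_ncard_of_injOn z (fun i hi => (hz i hi).2) (fun i hi j hj hij => ?_) hB
  by_contra hne
  exact (hA hi hj hne).notMem_of_mem_left (hz i hi).1 (hij ▸ (hz j hj).1)

theorem subset_biUnion_of_ncard_le (hA : (s : Set ι).PairwiseDisjoint A) (hB : B.Finite)
    (hAB : ∀ i ∈ s, (A i ∩ B).Nonempty) (hcard : B.ncard ≤ s.card) : B ⊆ ⋃ i ∈ s, A i := by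
  intro b hb
  by_contra hbA
  simp only [mem_iUnion, not_exists] at hbA
  have hAB' : ∀ i ∈ s, (A i ∩ (B \ {b})).Nonempty := fun i hi => by
    obtain ⟨z, hzA, hzB⟩ := hAB i hi
    exact ⟨z, hzA, hzB, fun hzb => hbA i hi (hzb ▸ hzA)⟩
  have := hA.card_le_ncard_of_inter_nonempty hB.sdiff hAB'
  rw [ncard_sdiff_singleton_of_mem hb] at this
  have : 0 < B.ncard := (ncard_pos hB).2 ⟨b, hb⟩
  omega

end Set.PairwiseDisjoint

section SuppPerfect

variable {G X : Type*} {supp : G → Set X}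

theorem exists_not_commute_supp_inter_subset_singleton [Mul G]
    (hfin : ∀ f : G, (supp f).Finite)
    (hperf : ∀ F : Set X, F.Finite → ∀ g : G, (∀ f, supp f ⊆ Fᶜ → Commute f g) → supp g ⊆ F)
    {g : G} {a : X} (ha : a ∈ supp g) {T : Set X} (hT : T.Finite) (haT : a ∉ T) :
    ∃ e : G, ¬Commute e g ∧ supp e ∩ supp g ⊆ {a} ∧ Disjoint (supp e) T := by
  set F := (supp g \ {a}) ∪ T
  have hgF : ¬supp g ⊆ F := fun h => (h ha).elim (fun h => h.2 rfl) haT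
  obtain ⟨e, heF, he⟩ : ∃ e, supp e ⊆ Fᶜ ∧ ¬Commute e g := by
    by_contra! h
    exact hgF (hperf F ((hfin g).sdiff.union hT) g h)
  refine ⟨e, he, fun z ⟨hze, hzg⟩ => ?_, disjoint_left.2 fun z hz hzT => heF hz (Or.inr hzT)⟩
  by_contra hza
  exact heF hze (Or.inl ⟨hzg, hza⟩)

theorem exists_pairwiseDisjoint_not_commute [Mul G] (hfin : ∀ f : G, (supp f).Finite)
    (hperf : ∀ F : Set X, F.Finite → ∀ g : G, (∀ f, supp f ⊆ Fᶜ → Commute f g) → supp g ⊆ F)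
    (g : G) (s : Finset X) (hs : ↑s ⊆ supp g) :
    ∃ f : X → G, (∀ x ∈ s, ¬Commute (f x) g ∧ supp (f x) ∩ supp g ⊆ {x}) ∧
      (s : Set X).PairwiseDisjoint (supp ∘ f) := by
  classical
  induction s using Finset.induction_on with
  | empty => exact ⟨fun _ => g, by simp, by simp⟩
  | @insert a s ha ih =>
    rw [Finset.coe_insert, insert_subset_iff] at hs
    obtain ⟨f, hf, hdisj⟩ := ih hs.2
    have haT : a ∉ ⋃ y ∈ s, supp (f y) := by
      simp only [mem_iUnion, not_exists]
      intro y hy hay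
      exact ha (((hf y hy).2 ⟨hay, hs.1⟩).symm ▸ hy)
    obtain ⟨e, he, heg, heT⟩ := exists_not_commute_supp_inter_subset_singleton hfin hperf hs.1
      (s.finite_toSet.biUnion fun y _ => hfin (f y)) haT
    have hupd : ∀ y ∈ s, Function.update f a e y = f y := fun y hy =>
      Function.update_of_ne (fun h : y = a => ha (h ▸ hy)) e f
    refine ⟨Function.update f a e, ?_, ?_⟩
    · intro x hx
      rcases Finset.mem_insert.1 hx with rfl | hx
      · rw [Function.update_self]
        exact ⟨he, heg⟩
      · simpa [hupd x hx] using hf x hx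
    · rw [Finset.coe_insert]
      refine PairwiseDisjoint.insert (fun x hx y hy hxy => ?_) fun y hy _ => ?_
      · simpa [Function.onFun, hupd x hx, hupd y hy] using hdisj hx hy hxy
      · simpa [Function.onFun, hupd y hy] using heT.mono_right (subset_biUnion_of_mem hy)

theorem setOf_ncard_supp_le_eq_iInter [Mul G] (hfin : ∀ f : G, (supp f).Finite)
    (hcomm : ∀ f g : G, Disjoint (supp f) (supp g) → Commute f g)
    (hperf : ∀ F : Set X, F.Finite → ∀ g : G, (∀ f, supp f ⊆ Fᶜ → Commute f g) → supp g ⊆ F)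
    (n : ℕ) :
    {g : G | (supp g).ncard ≤ n} = ⋂ (s : Finset X) (_ : s.card = n + 1) (f : X → G)
      (_ : (s : Set X).PairwiseDisjoint (supp ∘ f)), ⋃ x ∈ s, centralizer {f x} := by
  ext g
  simp only [mem_ofPred_eq, mem_iInter, mem_iUnion, mem_centralizer_iff, mem_singleton_iff,
    forall_eq, exists_prop]
  constructor
  · intro hg s hs f hdisj
    by_contra! hnc
    have := hdisj.card_le_ncard_of_inter_nonempty (hfin g) fun x hx =>
      not_disjoint_iff_nonempty_inter.1 fun h => hnc x hx (hcomm _ _ h)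
    omega
  · intro hg
    by_contra! hlt
    obtain ⟨s, hsg, hs⟩ := Finset.exists_subset_card_eq (s := (hfin g).toFinset) (n := n + 1)
      (by rwa [← ncard_eq_toFinset_card _ (hfin g)])
    obtain ⟨f, hf, hdisj⟩ := exists_pairwiseDisjoint_not_commute hfin hperf g s
      fun x hx => (hfin g).mem_toFinset.1 (hsg hx)
    obtain ⟨x, hx, hxg⟩ := hg s hs f hdisj
    exact (hf x hx).1 hxg

theorem isClosed_setOf_ncard_supp_le [Mul G] [TopologicalSpace G] [SeparatelyContinuousMul G]
    [T2Space G] (hfin : ∀ f : G, (supp f).Finite)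
    (hcomm : ∀ f g : G, Disjoint (supp f) (supp g) → Commute f g)
    (hperf : ∀ F : Set X, F.Finite → ∀ g : G, (∀ f, supp f ⊆ Fᶜ → Commute f g) → supp g ⊆ F)
    (n : ℕ) : IsClosed {g : G | (supp g).ncard ≤ n} := by
  rw [setOf_ncard_supp_le_eq_iInter hfin hcomm hperf]
  exact isClosed_iInter fun s => isClosed_iInter fun _ => isClosed_iInter fun f =>
    isClosed_iInter fun _ => isClosed_biUnion_finset fun x _ => isClosed_centralizer _

theorem isOpen_singleton_of_ncard_supp_maximal [Mul G] [TopologicalSpace G]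
    [SeparatelyContinuousMul G] [T2Space G] (hfin : ∀ f : G, (supp f).Finite)
    (hcomm : ∀ f g : G, Disjoint (supp f) (supp g) → Commute f g)
    (hperf : ∀ F : Set X, F.Finite → ∀ g : G, (∀ f, supp f ⊆ Fᶜ → Commute f g) → supp g ⊆ F)
    (hSF : ∀ F : Set X, F.Finite → {f : G | supp f ⊆ F}.Finite)
    {U : Set G} (hU : IsOpen U) {u : G} (hu : u ∈ U)
    (hmax : ∀ v ∈ U, (supp v).ncard ≤ (supp u).ncard) : IsOpen ({u} : Set G) := by
  set s := (hfin u).toFinset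
  obtain ⟨f, hf, hdisj⟩ := exists_pairwiseDisjoint_not_commute hfin hperf u s (by simp [s])
  set V := U ∩ ⋂ x ∈ s, (centralizer {f x})ᶜ
  have hVo : IsOpen V :=
    hU.inter (isOpen_biInter_finset fun x _ => (isClosed_centralizer _).isOpen_compl)
  have hV : V ∈ 𝓝 u := by
    refine hVo.mem_nhds ⟨hu, mem_iInter₂.2 fun x hx => ?_⟩
    simpa [mem_centralizer_iff, commute_iff_eq] using (hf x hx).1
  have hVT : V ⊆ {g | supp g ⊆ ⋃ x ∈ s, supp (f x)} := by
    rintro g ⟨hgU, hgf⟩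
    refine hdisj.subset_biUnion_of_ncard_le (hfin g) (fun x hx => ?_) ?_
    · refine not_disjoint_iff_nonempty_inter.1 fun h => mem_iInter₂.1 hgf x hx ?_
      simpa [mem_centralizer_iff, commute_iff_eq] using hcomm _ _ h
    · rw [← ncard_eq_toFinset_card _ (hfin u)]
      exact hmax g hgU
  exact isOpen_singleton_of_finite_mem_nhds u hV
    ((hSF _ (s.finite_toSet.biUnion fun x _ => hfin (f x))).subset hVT)

end SuppPerfect

theorem suppPerfect_group_discrete_of_baire_hausdorff_shift_invariant_general
    {G X : Type*} [Group G] (supp : G → Set X)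
    (h2 : ∀ f g : G, supp f ∩ supp g = ∅ → f * g = g * f)
    (hfin : ∀ f : G, (supp f).Finite)
    (hSF : ∀ F : Set X, F.Finite → {f : G | supp f ⊆ F}.Finite)
    (hperf : ∀ F : Set X, F.Finite →
      {f : G | supp f ⊆ F} = {g : G | ∀ f : G, supp f ⊆ Fᶜ → f * g = g * f})
    (τ : TopologicalSpace G) (hT2 : @T2Space G τ)
    (hleft : ∀ a : G, @Continuous _ _ τ τ (fun x => a * x))
    (hright : ∀ a : G, @Continuous _ _ τ τ (fun x => x * a))
    (hBaire : ∀ U : ℕ → Set G, (∀ n, @IsOpen _ τ (U n)) → (∀ n, @Dense _ τ (U n)) →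
      @Dense _ τ (⋂ n, U n)) :
    @DiscreteTopology G τ := by
  have : SeparatelyContinuousMul G := ⟨hleft _, hright _⟩
  have : BaireSpace G := ⟨hBaire⟩
  have hcomm (f g : G) (h : Disjoint (supp f) (supp g)) : Commute f g :=
    h2 f g (disjoint_iff_inter_eq_empty.1 h)
  have hperf' (F : Set X) (hF : F.Finite) (g : G) (hg : ∀ f, supp f ⊆ Fᶜ → Commute f g) :
      supp g ⊆ F :=
    (hperf F hF ▸ hg : g ∈ {f : G | supp f ⊆ F})
  obtain ⟨n, hn⟩ := nonempty_interior_of_iUnion_of_closed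
    (isClosed_setOf_ncard_supp_le hfin hcomm hperf')
    (iUnion_eq_univ_iff.2 fun g => ⟨(supp g).ncard, le_refl (supp g).ncard⟩)
  have hbdd : BddAbove ((fun v => (supp v).ncard) '' interior {g | (supp g).ncard ≤ n}) :=
    ⟨n, forall_mem_image.2 fun g hg => interior_subset (s := {g | (supp g).ncard ≤ n}) hg⟩
  obtain ⟨_, ⟨u, hu, rfl⟩, hmax⟩ := hbdd.exists_isGreatest_of_nonempty (hn.image _)
  have hu1 := isOpen_singleton_of_ncard_supp_maximal hfin hcomm hperf' hSF isOpen_interior hu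
    (forall_mem_image.1 hmax)
  exact discreteTopology_of_isOpen_singleton_one (by simpa using isOpenMap_mul_left u⁻¹ _ hu1)

/-- Every perfectly supportable group is discrete in each Baire Hausdorff shift-invariant
topology. -/
theorem suppPerfect_group_discrete_of_baire_hausdorff_shift_invariant
    {G X : Type*} [Group G] (supp : G → Set X)
    (h1 : ∀ f g : G, supp (f * g) ⊆ supp f ∪ supp g)
    (h2 : ∀ f g : G, supp f ∩ supp g = ∅ → f * g = g * f)
    (hX : (⋃ a : G, supp a) = Set.univ)
    (hfin : ∀ f : G, (supp f).Finite)
    (hSF : ∀ F : Set X, F.Finite → {f : G | supp f ⊆ F}.Finite)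
    (hperf : ∀ F : Set X, F.Finite →
      {f : G | supp f ⊆ F} = {g : G | ∀ f : G, supp f ⊆ Fᶜ → f * g = g * f})
    (τ : TopologicalSpace G) (hT2 : @T2Space G τ)
    (hleft : ∀ a : G, @Continuous _ _ τ τ (fun x => a * x))
    (hright : ∀ a : G, @Continuous _ _ τ τ (fun x => x * a))
    (hBaire : ∀ U : ℕ → Set G, (∀ n, @IsOpen _ τ (U n)) → (∀ n, @Dense _ τ (U n)) →
      @Dense _ τ (⋂ n, U n)) :
    @DiscreteTopology G τ :=
  suppPerfect_group_discrete_of_baire_hausdorff_shift_invariant_general supp h2 hfin hSF hperf τ hT2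
    hleft hright hBaire
end

section
/- Let X be an infinite set, let FRel(X) = {f ⊆ X × X : supp(f) is finite} be the semigroup of finitely supported relations under composition f∘g = {(x,z) : ∃ y, (x,y) ∈ f and (y,z) ∈ g}, where supp(f) = {x ∈ X : f(x) ≠ {x} or f⁻¹(x) ≠ {x}}. Let S ⊆ FRel(X) be a subsemigroup such that for each finite subset E ⊆ X and each point x ∈ X∖E there is g ∈ S with supp(g) ⊆ X∖E and x ∉ g(x) and g(x) ≠ ∅. Then for every finite subset F ⊆ X one has S(F) = Cent(S(X∖F)), where S(A) = {f ∈ S : supp(f) ⊆ A} and Cent(T) = {f ∈ S : ∀ g ∈ T, f∘g = g∘f}; in particular (S, supp) is a supp-perfect semigroup. -/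
/-- Composition of relations: `f ∘ g = {(x,z) : ∃ y, (x,y) ∈ f ∧ (y,z) ∈ g}`. -/
def relComp {X : Type*} (f g : Set (X × X)) : Set (X × X) :=
  {p : X × X | ∃ y : X, (p.1, y) ∈ f ∧ (y, p.2) ∈ g}

/-- The image `f(x) = {y : (x,y) ∈ f}` of a point under a relation. -/
def relImg {X : Type*} (f : Set (X × X)) (x : X) : Set X := {y : X | (x, y) ∈ f}

/-- The preimage `f⁻¹(x) = {y : (y,x) ∈ f}` of a point under a relation. -/
def relPre {X : Type*} (f : Set (X × X)) (x : X) : Set X := {y : X | (y, x) ∈ f}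

/-- The support of a relation: `supp f = {x : f(x) ≠ {x} or f⁻¹(x) ≠ {x}}`. -/
def relSupp {X : Type*} (f : Set (X × X)) : Set X :=
  {x : X | relImg f x ≠ {x} ∨ relPre f x ≠ {x}}

/-!
Relations with disjoint supports commute, which gives `S(F) ⊆ Cent(S(X∖F))`. Conversely, let `f`
commute with `S(X∖F)` and suppose `x ∈ supp f ∖ F`. Pick `g ∈ S` sending `x` to some `w ≠ x`,
with `x ∉ g(x)` and `supp g` avoiding `(supp f ∪ F) ∖ {x}`, so that `x` is the only point moved
by both `f` and `g`. Comparing `f ∘ g` with `g ∘ f` at `(x, w)`, and at `(x, y)` or `(y, w)` for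
a point `y ≠ x` related to `x` by `f`, shows that `f(x) = f⁻¹(x) = {x}`, i.e. `x ∉ supp f`.
Finally `S(F)` is finite because a relation supported in `F` is determined by its trace on `F × F`.
-/

section RelSupp

variable {X : Type*} {f g : Set (X × X)} {x y w : X}

lemma mem_left_iff_of_notMem_relSupp (h : x ∉ relSupp f) : (x, y) ∈ f ↔ y = x := by
  simp only [relSupp, Set.mem_ofPred_eq, not_or, not_not] at h
  simpa [relImg] using Set.ext_iff.mp h.1 y

lemma mem_right_iff_of_notMem_relSupp (h : x ∉ relSupp f) : (y, x) ∈ f ↔ y = x := by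
  simp only [relSupp, Set.mem_ofPred_eq, not_or, not_not] at h
  simpa [relPre] using Set.ext_iff.mp h.2 y

lemma left_mem_relSupp (h : (x, y) ∈ f) (hne : y ≠ x) : x ∈ relSupp f := by
  by_contra hx
  exact hne ((mem_left_iff_of_notMem_relSupp hx).mp h)

lemma right_mem_relSupp (h : (x, y) ∈ f) (hne : x ≠ y) : y ∈ relSupp f := by
  by_contra hy
  exact hne ((mem_right_iff_of_notMem_relSupp hy).mp h)

lemma mem_relSupp_iff : x ∈ relSupp f ↔
    (x, x) ∉ f ∨ (∃ y ≠ x, (x, y) ∈ f) ∨ ∃ y ≠ x, (y, x) ∈ f := by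
  refine ⟨fun hx => ?_, ?_⟩
  · by_contra! h
    obtain ⟨hxx, himg, hpre⟩ := h
    refine hx.elim (fun himg' => himg' ?_) (fun hpre' => hpre' ?_) <;> ext y
    · exact ⟨fun hy => by_contra fun hne => himg y hne hy, fun hy => hy ▸ hxx⟩
    · exact ⟨fun hy => by_contra fun hne => hpre y hne hy, fun hy => hy ▸ hxx⟩
  · rintro (hxx | ⟨y, hne, hxy⟩ | ⟨y, hne, hyx⟩)
    · by_contra hx
      exact hxx ((mem_left_iff_of_notMem_relSupp hx).mpr rfl)
    · exact left_mem_relSupp hxy hne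
    · exact right_mem_relSupp hyx hne

lemma relComp_subset_of_disjoint (h : Disjoint (relSupp f) (relSupp g)) :
    relComp f g ⊆ relComp g f := by
  rintro ⟨x, z⟩ ⟨y, hxy, hyz⟩
  by_cases hyx : y = x
  · subst hyx
    by_cases hzy : z = y
    · subst hzy
      exact ⟨z, hyz, hxy⟩
    · have hzf : z ∉ relSupp f :=
        Set.disjoint_right.mp h (right_mem_relSupp hyz (Ne.symm hzy))
      exact ⟨z, hyz, (mem_left_iff_of_notMem_relSupp hzf).mpr rfl⟩
  · have hyg : y ∉ relSupp g :=
      Set.disjoint_left.mp h (right_mem_relSupp hxy (Ne.symm hyx))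
    have hxg : x ∉ relSupp g := Set.disjoint_left.mp h (left_mem_relSupp hxy hyx)
    obtain rfl : z = y := (mem_left_iff_of_notMem_relSupp hyg).mp hyz
    exact ⟨x, (mem_left_iff_of_notMem_relSupp hxg).mpr rfl, hxy⟩

lemma relComp_comm_of_disjoint (h : Disjoint (relSupp f) (relSupp g)) :
    relComp f g = relComp g f :=
  (relComp_subset_of_disjoint h).antisymm (relComp_subset_of_disjoint h.symm)

lemma finite_setOf_relSupp_subset {F : Set X} (hF : F.Finite) :
    {f : Set (X × X) | relSupp f ⊆ F}.Finite := by
  refine Set.Finite.of_finite_image (f := (· ∩ F ×ˢ F)) ?_ ?_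
  · refine (hF.prod hF).finite_subsets.subset ?_
    rintro _ ⟨f, -, rfl⟩
    exact Set.inter_subset_right
  · intro f hf g hg hfg
    ext ⟨a, b⟩
    by_cases hab : a ∈ F ∧ b ∈ F
    · simpa [hab] using Set.ext_iff.mp hfg (a, b)
    rcases not_and_or.mp hab with ha | hb
    · rw [mem_left_iff_of_notMem_relSupp (fun h => ha (hf h)),
        mem_left_iff_of_notMem_relSupp (fun h => ha (hg h))]
    · rw [mem_right_iff_of_notMem_relSupp (fun h => hb (hf h)),
        mem_right_iff_of_notMem_relSupp (fun h => hb (hg h))]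

lemma notMem_left_of_relComp_comm (hc : relComp f g = relComp g f)
    (hfg : relSupp f ∩ relSupp g ⊆ {x}) (hxx : (x, x) ∉ g) (hyx : y ≠ x) : (x, y) ∉ f := by
  intro hxy
  have hyg : y ∉ relSupp g := fun hyg => hyx (hfg ⟨right_mem_relSupp hxy hyx.symm, hyg⟩)
  have hyy : (y, y) ∈ g := (mem_left_iff_of_notMem_relSupp hyg).mpr rfl
  obtain ⟨t, hxt, hty⟩ : (x, y) ∈ relComp g f := hc ▸ ⟨y, hxy, hyy⟩
  have htx : t ≠ x := by rintro rfl; exact hxx hxt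
  have htg : t ∈ relSupp g := right_mem_relSupp hxt htx.symm
  have htf : t ∉ relSupp f := fun htf => htx (hfg ⟨htf, htg⟩)
  obtain rfl : y = t := (mem_left_iff_of_notMem_relSupp htf).mp hty
  exact hyg htg

lemma notMem_right_of_relComp_comm (hc : relComp f g = relComp g f)
    (hfg : relSupp f ∩ relSupp g ⊆ {x}) (hxw : (x, w) ∈ g) (hwx : w ≠ x) (hyx : y ≠ x) :
    (y, x) ∉ f := by
  intro hyx'
  have hyg : y ∉ relSupp g := fun hyg => hyx (hfg ⟨left_mem_relSupp hyx' hyx.symm, hyg⟩)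
  obtain ⟨t, hyt, htw⟩ : (y, w) ∈ relComp g f := hc ▸ ⟨x, hyx', hxw⟩
  obtain rfl : t = y := (mem_left_iff_of_notMem_relSupp hyg).mp hyt
  have hwg : w ∈ relSupp g := right_mem_relSupp hxw hwx.symm
  have hwf : w ∉ relSupp f := fun hwf => hwx (hfg ⟨hwf, hwg⟩)
  obtain rfl : t = w := (mem_right_iff_of_notMem_relSupp hwf).mp htw
  exact hyg hwg

lemma mem_of_relComp_comm (hc : relComp f g = relComp g f) (hfg : relSupp f ∩ relSupp g ⊆ {x})
    (hxx : (x, x) ∉ g) (hxw : (x, w) ∈ g) : (x, x) ∈ f := by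
  by_contra hfx
  have hwx : w ≠ x := by rintro rfl; exact hxx hxw
  have hwf : w ∉ relSupp f := fun hwf => hwx (hfg ⟨hwf, right_mem_relSupp hxw hwx.symm⟩)
  have hww : (w, w) ∈ f := (mem_left_iff_of_notMem_relSupp hwf).mpr rfl
  obtain ⟨t, hxt, -⟩ : (x, w) ∈ relComp f g := hc ▸ ⟨w, hxw, hww⟩
  have htx : t ≠ x := by rintro rfl; exact hfx hxt
  exact notMem_left_of_relComp_comm hc hfg hxx htx hxt

lemma notMem_relSupp_of_relComp_comm (hc : relComp f g = relComp g f)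
    (hfg : relSupp f ∩ relSupp g ⊆ {x}) (hxx : (x, x) ∉ g) (hxw : (x, w) ∈ g) :
    x ∉ relSupp f := by
  have hwx : w ≠ x := by rintro rfl; exact hxx hxw
  rw [mem_relSupp_iff]
  rintro (hfx | ⟨y, hyx, hxy⟩ | ⟨y, hyx, hyx'⟩)
  · exact hfx (mem_of_relComp_comm hc hfg hxx hxw)
  · exact notMem_left_of_relComp_comm hc hfg hxx hyx hxy
  · exact notMem_right_of_relComp_comm hc hfg hxw hwx hyx hyx'

lemma relSupp_subset_of_forall_relComp_comm {S : Set (Set (X × X))}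
    (hmove : ∀ E : Set X, E.Finite → ∀ x ∉ E, ∃ g ∈ S,
      relSupp g ⊆ Eᶜ ∧ x ∉ relImg g x ∧ (relImg g x).Nonempty)
    {F : Set X} (hF : F.Finite) (hf : (relSupp f).Finite)
    (hcomm : ∀ g ∈ S, relSupp g ⊆ Fᶜ → relComp f g = relComp g f) : relSupp f ⊆ F := by
  intro x hx
  by_contra hxF
  obtain ⟨g, hgS, hgE, hxx, w, hxw⟩ :=
    hmove ((relSupp f ∪ F) \ {x}) (hf.union hF).sdiff x (fun h => h.2 rfl)
  have hgF : relSupp g ⊆ Fᶜ := by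
    intro t htg htF
    obtain rfl | htx := eq_or_ne t x
    · exact hxF htF
    · exact hgE htg ⟨Or.inr htF, htx⟩
  have hfg : relSupp f ∩ relSupp g ⊆ {x} := fun t ⟨htf, htg⟩ =>
    by_contra fun htx => hgE htg ⟨Or.inl htf, htx⟩
  exact notMem_relSupp_of_relComp_comm (hcomm g hgS hgF) hfg hxx hxw hx

end RelSupp

theorem subsemigroup_of_FRel_suppPerfect_general {X : Type*}
    (S : Set (Set (X × X)))
    (hfin : ∀ f ∈ S, (relSupp f).Finite)
    (hmove : ∀ E : Set X, E.Finite → ∀ x ∉ E, ∃ g ∈ S,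
      relSupp g ⊆ Eᶜ ∧ x ∉ relImg g x ∧ (relImg g x).Nonempty) :
    (∀ F : Set X, F.Finite →
      {f ∈ S | relSupp f ⊆ F} =
        {f ∈ S | ∀ g ∈ S, relSupp g ⊆ Fᶜ → relComp f g = relComp g f}) ∧
    (∀ F : Set X, F.Finite → {f ∈ S | relSupp f ⊆ F}.Finite) := by
  refine ⟨fun F hF => Set.ext fun f => ⟨?_, ?_⟩, fun F hF => ?_⟩
  · rintro ⟨hfS, hfF⟩
    exact ⟨hfS, fun g _ hgF =>
      relComp_comm_of_disjoint (Set.disjoint_of_subset hfF hgF disjoint_compl_right)⟩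
  · rintro ⟨hfS, hcomm⟩
    exact ⟨hfS, relSupp_subset_of_forall_relComp_comm hmove hF (hfin f hfS) hcomm⟩
  · exact (finite_setOf_relSupp_subset hF).subset fun f hf => hf.2

/-- Let `S` be a subsemigroup of the semigroup `FRel X` of finitely supported relations on an
infinite set `X` such that for each finite `E ⊆ X` and each `x ∉ E` there is `g ∈ S` with
`supp g ⊆ X∖E`, `x ∉ g(x)` and `g(x) ≠ ∅`. Then `S(F) = Cent(S(X∖F))` for every finite
`F ⊆ X`; in particular, together with the finiteness of each `S(F)`, `(S, supp)` is a
supp-perfect semigroup. -/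
theorem subsemigroup_of_FRel_suppPerfect {X : Type*} [Infinite X]
    (S : Set (Set (X × X)))
    (hmul : ∀ f ∈ S, ∀ g ∈ S, relComp f g ∈ S)
    (hfin : ∀ f ∈ S, (relSupp f).Finite)
    (hmove : ∀ E : Set X, E.Finite → ∀ x ∉ E, ∃ g ∈ S,
      relSupp g ⊆ Eᶜ ∧ x ∉ relImg g x ∧ (relImg g x).Nonempty) :
    (∀ F : Set X, F.Finite →
      {f ∈ S | relSupp f ⊆ F} =
        {f ∈ S | ∀ g ∈ S, relSupp g ⊆ Fᶜ → relComp f g = relComp g f}) ∧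
    (∀ F : Set X, F.Finite → {f ∈ S | relSupp f ⊆ F}.Finite) :=
  subsemigroup_of_FRel_suppPerfect_general S hfin hmove
end
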